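/- arXiv:1702.06667 — 5 statements merged into one kernel-verified Lean document; each statement's English description precedes it below -/
import Mathlib

section
/- There exists a constant C > 0, depending only on p, such that for all real numbers a and b, the integral over t in [0,1] of (1 + |t*a + (1-t)*b|)^(p-2) dt is at least C * (1 + |a| + |b|)^(p-2), where p ≥ 2. -/
open Real MeasureTheory intervalIntegral

private lemma aux_key (p a b u : ℝ) (hp : 2 ≤ p) (hu0 : 0 ≤ u) (hu1 : u + 1/4 ≤ 1)
    (hlow : ∀ t ∈ Set.Icc u (u + 1/4),
      (1 + |a| + |b|) / 4 ≤ 1 + |t * a + (1 - t) * b|) :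
    (1/4 : ℝ) ^ (p - 1) * (1 + |a| + |b|) ^ (p - 2) ≤
      ∫ t in (0:ℝ)..1, (1 + |t * a + (1 - t) * b|) ^ (p - 2) := by
  set X := 1 + |a| + |b| with hX
  have hXpos : 0 < X := by positivity
  set f : ℝ → ℝ := fun t => (1 + |t * a + (1 - t) * b|) ^ (p - 2) with hf
  have hcont : Continuous f := by
    apply Continuous.rpow_const
    · fun_prop
    · intro x; left; positivity
  have hint : ∀ y z : ℝ, IntervalIntegrable f volume y z :=
    fun y z => hcont.intervalIntegrable y z
  have hnn : ∀ t : ℝ, 0 ≤ f t := fun t => by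
    apply Real.rpow_nonneg; positivity
  have hsplit : ∫ t in (0:ℝ)..1, f t =
      (∫ t in (0:ℝ)..u, f t) + (∫ t in u..(u+1/4), f t) + ∫ t in (u+1/4)..1, f t := by
    rw [integral_add_adjacent_intervals (hint 0 u) (hint u (u+1/4)),
      integral_add_adjacent_intervals (hint 0 (u+1/4)) (hint (u+1/4) 1)]
  have h1 : (0:ℝ) ≤ ∫ t in (0:ℝ)..u, f t :=
    integral_nonneg hu0 (fun t _ => hnn t)
  have h3 : (0:ℝ) ≤ ∫ t in (u+1/4)..1, f t :=
    integral_nonneg hu1 (fun t _ => hnn t)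
  have h2 : (1/4 : ℝ) * (X/4) ^ (p - 2) ≤ ∫ t in u..(u+1/4), f t := by
    have := integral_mono_on (a := u) (b := u + 1/4) (by linarith)
      (_root_.intervalIntegrable_const (c := (X/4) ^ (p - 2))) (hint u (u+1/4))
      (fun t ht => by
        apply Real.rpow_le_rpow (by positivity) (hlow t ht) (by linarith))
    rwa [intervalIntegral.integral_const, show u + 1/4 - u = 1/4 by ring, smul_eq_mul] at this
  have hC : (1/4 : ℝ) ^ (p - 1) * X ^ (p - 2) = (1/4 : ℝ) * (X/4) ^ (p - 2) := by
    rw [div_rpow hXpos.le (by norm_num), show p - 1 = (p-2) + 1 by ring,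
      Real.rpow_add (by norm_num), Real.rpow_one,
      Real.div_rpow (by norm_num) (by norm_num : (0:ℝ) ≤ 4), Real.one_rpow]
    have h4 : (0:ℝ) < (4:ℝ) ^ (p - 2) := Real.rpow_pos_of_pos (by norm_num) _
    ring
  rw [hsplit, hC]
  linarith

/-- There exists a constant `C > 0`, depending only on `p ≥ 2`, such that for all real
numbers `a` and `b`,
`∫_0^1 (1 + |t*a + (1-t)*b|)^(p-2) dt ≥ C * (1 + |a| + |b|)^(p-2)`. -/
theorem stmt_0 (p : ℝ) (hp : 2 ≤ p) :
    ∃ C : ℝ, 0 < C ∧ ∀ a b : ℝ,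
      C * (1 + |a| + |b|) ^ (p - 2) ≤
        ∫ t in (0:ℝ)..1, (1 + |t * a + (1 - t) * b|) ^ (p - 2) := by
  refine ⟨(1/4 : ℝ) ^ (p - 1), Real.rpow_pos_of_pos (by norm_num) _, ?_⟩
  intro a b
  rcases le_total |b| |a| with h | h
  · apply aux_key p a b (3/4) hp (by norm_num) (by norm_num)
    intro t ht
    obtain ⟨ht1, ht2⟩ := ht
    have habs : |t * a| - |(1 - t) * b| ≤ |t * a + (1 - t) * b| := by
      have := abs_sub_abs_le_abs_sub (t * a) (-((1 - t) * b))
      simpa [sub_neg_eq_add] using this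
    rw [abs_mul, abs_mul, abs_of_nonneg (by linarith : (0:ℝ) ≤ t),
      abs_of_nonneg (by linarith : (0:ℝ) ≤ 1 - t)] at habs
    have ha0 : 0 ≤ |a| := abs_nonneg a
    have hb0 : 0 ≤ |b| := abs_nonneg b
    nlinarith
  · apply aux_key p a b 0 hp le_rfl (by norm_num)
    intro t ht
    obtain ⟨ht1, ht2⟩ := ht
    have habs : |(1 - t) * b| - |t * a| ≤ |t * a + (1 - t) * b| := by
      have := abs_sub_abs_le_abs_sub ((1 - t) * b) (-(t * a))
      simpa [sub_neg_eq_add, add_comm] using this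
    rw [abs_mul, abs_mul, abs_of_nonneg (by linarith : (0:ℝ) ≤ t),
      abs_of_nonneg (by linarith : (0:ℝ) ≤ 1 - t)] at habs
    have ha0 : 0 ≤ |a| := abs_nonneg a
    have hb0 : 0 ≤ |b| := abs_nonneg b
    nlinarith
end

section
/- Let X be a real Banach space and φ : X → ℝ a C¹ functional that is bounded below. Then φ satisfies the Palais–Smale condition if and only if φ satisfies the Cerami condition. -/
/-!
Cerami sequences are Palais–Smale sequences, so the Palais–Smale condition implies the Cerami
condition. Conversely, a functional that is bounded below and satisfies the Cerami condition has
bounded sublevel sets, so every Palais–Smale sequence is bounded and hence a Cerami sequence.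
If a sublevel set `{φ ≤ M}` were unbounded, let `c` be the limit of the infima of `φ` outside
the balls of radius `R`. Ekeland's principle, applied to `φ` on `{‖v‖ ≥ R}` at a far point `w`
with `φ w ≈ c` and slope `ε / ‖w‖`, produces a point `p` comparable in norm to `w` with
`‖φ' p‖ ≲ ε / ‖p‖`; these points form a Cerami sequence escaping to infinity.
-/

open Filter Topology Set

section Ekeland

variable {α : Type*} [MetricSpace α]

lemma mul_dist_le_sub_of_mul_dist_succ_le {u : ℕ → α} {a : ℕ → ℝ} {σ : ℝ} (hσ : 0 ≤ σ)
    (h : ∀ n, σ * dist (u n) (u (n + 1)) ≤ a n - a (n + 1)) {n k : ℕ} (hnk : n ≤ k) :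
    σ * dist (u n) (u k) ≤ a n - a k := by
  induction k, hnk using Nat.le_induction with
  | base => simp
  | succ k _ ih =>
    have := mul_le_mul_of_nonneg_left (dist_triangle (u n) (u k) (u (k + 1))) hσ
    linarith [h k]

lemma cauchySeq_of_mul_dist_le_sub {u : ℕ → α} {a : ℕ → ℝ} {σ : ℝ} (hσ : 0 < σ)
    (ha : BddBelow (range a)) (h : ∀ n k, n ≤ k → σ * dist (u n) (u k) ≤ a n - a k) :
    CauchySeq u := by
  have ha_anti : Antitone a := fun n k hnk => by
    linarith [h n k hnk, mul_nonneg hσ.le (dist_nonneg (x := u n) (y := u k))]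
  have ha_cauchy : CauchySeq a := (tendsto_atTop_ciInf ha_anti ha).cauchySeq
  refine Metric.cauchySeq_iff'.2 fun ε hε => ?_
  obtain ⟨N, hN⟩ := Metric.cauchySeq_iff'.1 ha_cauchy (σ * ε) (mul_pos hσ hε)
  refine ⟨N, fun n hn => ?_⟩
  have hgap : a N - a n < σ * ε := by
    have := hN n hn
    rw [Real.dist_eq, abs_sub_comm, abs_lt] at this
    linarith
  rw [dist_comm]
  exact lt_of_mul_lt_mul_left ((h N n hn).trans_lt hgap) hσ.le

theorem LowerSemicontinuous.exists_ekeland_point [CompleteSpace α] {f : α → ℝ}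
    (hf : LowerSemicontinuous f) {m : ℝ} (hm : ∀ z, m ≤ f z) {σ : ℝ} (hσ : 0 < σ) (x₀ : α) :
    ∃ p, f p ≤ f x₀ ∧ σ * dist x₀ p ≤ f x₀ - m ∧ ∀ z, f p ≤ f z + σ * dist p z := by
  set S : α → Set α := fun a => {z | f z + σ * dist a z ≤ f a}
  have hstep : ∀ (n : ℕ) (a : α), ∃ z ∈ S a, ∀ z' ∈ S a, f z ≤ f z' + 1 / (n + 1) := by
    intro n a
    have hne : (f '' S a).Nonempty := ⟨f a, a, by simp [S], rfl⟩
    obtain ⟨_, ⟨z, hz, rfl⟩, hlt⟩ :=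
      exists_lt_of_csInf_lt hne (lt_add_of_pos_right _ (Nat.one_div_pos_of_nat (n := n)))
    refine ⟨z, hz, fun z' hz' => hlt.le.trans ?_⟩
    gcongr
    exact csInf_le ⟨m, by rintro _ ⟨v, _, rfl⟩; exact hm v⟩ ⟨z', hz', rfl⟩
  choose F hFS hFmin using hstep
  -- `y (n + 1)` is a `1 / (n + 1)`-minimizer of `f` on `S (y n)`
  let y : ℕ → α := fun n => Nat.rec x₀ F n
  have hy_dist : ∀ n k, n ≤ k → σ * dist (y n) (y k) ≤ f (y n) - f (y k) := fun n k =>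
    mul_dist_le_sub_of_mul_dist_succ_le hσ.le fun n => by
      have : f (y (n + 1)) + σ * dist (y n) (y (n + 1)) ≤ f (y n) := hFS n (y n)
      linarith
  obtain ⟨p, hp⟩ := cauchySeq_tendsto_of_complete <|
    cauchySeq_of_mul_dist_le_sub hσ ⟨m, by rintro _ ⟨n, rfl⟩; exact hm _⟩ hy_dist
  have hfp : ∀ k, f p ≤ f (y k) := fun k =>
    (hf.isClosed_preimage (f (y k))).mem_of_tendsto hp <|
      (eventually_ge_atTop k).mono fun n hn => show f (y n) ≤ f (y k) by
        linarith [hy_dist k n hn, mul_nonneg hσ.le (dist_nonneg (x := y k) (y := y n))]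
  have hdist_p : ∀ n, σ * dist (y n) p ≤ f (y n) - f p := fun n =>
    le_of_tendsto ((tendsto_const_nhds.dist hp).const_mul σ) <|
      (eventually_ge_atTop n).mono fun k hk =>
        show σ * dist (y n) (y k) ≤ f (y n) - f p by linarith [hy_dist n k hk, hfp k]
  have hdist_x₀ : σ * dist x₀ p ≤ f x₀ - f p := hdist_p 0
  refine ⟨p, hfp 0, by linarith [hm p], fun z => ?_⟩
  by_contra! hz
  have hzS : ∀ n, z ∈ S (y n) := fun n => by
    have := mul_le_mul_of_nonneg_left (dist_triangle (y n) p z) hσ.le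
    show f z + σ * dist (y n) z ≤ f (y n)
    linarith [hdist_p n]
  have hfpz : f p ≤ f z := ge_of_tendsto'
    (by simpa using (tendsto_one_div_add_atTop_nhds_zero_nat.const_add (f z)))
    fun n => (hfp (n + 1)).trans (hFmin n (y n) z (hzS n))
  linarith [mul_nonneg hσ.le (dist_nonneg (x := p) (y := z))]

end Ekeland

theorem HasFDerivAt.norm_le_of_eventually_le_add_mul_norm {E : Type*} [NormedAddCommGroup E]
    [NormedSpace ℝ E] {f : E → ℝ} {f' : E →L[ℝ] ℝ} {x₀ : E} (hf : HasFDerivAt f f' x₀) {C : ℝ}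
    (hC : 0 ≤ C) (hmin : ∀ᶠ x in 𝓝 x₀, f x₀ ≤ f x + C * ‖x - x₀‖) : ‖f'‖ ≤ C := by
  refine le_of_forall_pos_le_add fun ε hε => ContinuousLinearMap.opNorm_le_of_nhds_zero
    (add_nonneg hC hε.le) ?_
  rw [← map_add_left_nhds_zero x₀, eventually_map] at hmin
  have hlower : ∀ᶠ v in 𝓝 (0 : E), -f' v ≤ (C + ε) * ‖v‖ := by
    filter_upwards [Asymptotics.isLittleO_iff.1 (hasFDerivAt_iff_isLittleO_nhds_zero.1 hf) hε, hmin]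
      with v hv hvC
    rw [add_sub_cancel_left] at hvC
    rw [Real.norm_eq_abs, abs_le] at hv
    linarith
  filter_upwards [hlower, (continuous_neg.tendsto' (0 : E) 0 neg_zero).eventually hlower]
    with v hv hv_neg
  rw [map_neg, norm_neg] at hv_neg
  rw [Real.norm_eq_abs, abs_le]
  constructor <;> linarith

lemma exists_far_almost_minimizers_outside_ball {X : Type*} [NormedAddCommGroup X] {φ : X → ℝ}
    (hbdd : BddBelow (range φ)) {M : ℝ}
    (hfar : ∀ R, ∃ v, R ≤ ‖v‖ ∧ φ v ≤ M) {δ : ℝ} (hδ : 0 < δ) (R₀ : ℝ) :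
    ∃ R, R₀ ≤ R ∧ ∀ W, ∃ w, W ≤ ‖w‖ ∧ φ w ≤ M + δ ∧ ∀ v, R ≤ ‖v‖ → φ w ≤ φ v + δ := by
  let g : ℝ → ℝ := fun R => ⨅ v : {v : X // R ≤ ‖v‖}, φ v
  have : ∀ R, Nonempty {v : X // R ≤ ‖v‖} := fun R =>
    let ⟨v, hv, _⟩ := hfar R; ⟨⟨v, hv⟩⟩
  have hgbdd : ∀ R, BddBelow (range fun v : {v : X // R ≤ ‖v‖} => φ v) := fun R =>
    hbdd.mono (range_comp_subset_range _ _)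
  have hg_le : ∀ R v, R ≤ ‖v‖ → g R ≤ φ v := fun R v hv => ciInf_le (hgbdd R) ⟨v, hv⟩
  have hg_mono : Monotone g := fun R R' hRR' =>
    le_ciInf fun v => hg_le R v (hRR'.trans v.2)
  have hg_bdd : BddAbove (range g) := ⟨M, by
    rintro _ ⟨R, rfl⟩
    obtain ⟨v, hv, hvM⟩ := hfar R
    exact (hg_le R v hv).trans hvM⟩
  obtain ⟨R, hgR, hR₀⟩ := ((tendsto_atTop_ciSup hg_mono hg_bdd).eventually
    (eventually_gt_nhds (sub_lt_self _ (half_pos hδ)))).and (eventually_ge_atTop R₀) |>.exists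
  refine ⟨R, hR₀, fun W => ?_⟩
  obtain ⟨w, hw⟩ := exists_lt_of_ciInf_lt (lt_add_of_pos_right (g W) (half_pos hδ))
  have hgW : g W ≤ ⨆ R, g R := le_ciSup hg_bdd W
  obtain ⟨v, hv, hvM⟩ := hfar W
  refine ⟨w, w.2, by linarith [hg_le W v hv], fun v hv => ?_⟩
  linarith [hg_le R v hv]

section Cerami

variable {X : Type*} [NormedAddCommGroup X] [NormedSpace ℝ X]

def PalaisSmaleCondition (φ : X → ℝ) (φ' : X → X →L[ℝ] ℝ) : Prop :=
  ∀ x : ℕ → X, (∃ M : ℝ, ∀ j, |φ (x j)| ≤ M) →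
    Tendsto (fun j => ‖φ' (x j)‖) atTop (𝓝 0) →
    ∃ (s : ℕ → ℕ) (y : X), StrictMono s ∧ Tendsto (fun j => x (s j)) atTop (𝓝 y)

def CeramiCondition (φ : X → ℝ) (φ' : X → X →L[ℝ] ℝ) : Prop :=
  ∀ x : ℕ → X, (∃ M : ℝ, ∀ j, |φ (x j)| ≤ M) →
    Tendsto (fun j => (1 + ‖x j‖) * ‖φ' (x j)‖) atTop (𝓝 0) →
    ∃ (s : ℕ → ℕ) (y : X), StrictMono s ∧ Tendsto (fun j => x (s j)) atTop (𝓝 y)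

variable {φ : X → ℝ} {φ' : X → X →L[ℝ] ℝ}

lemma PalaisSmaleCondition.ceramiCondition (h : PalaisSmaleCondition φ φ') :
    CeramiCondition φ φ' := fun x hM hx => h x hM <|
  squeeze_zero (fun _ => norm_nonneg _)
    (fun _ => le_mul_of_one_le_left (norm_nonneg _) (le_add_of_nonneg_right (norm_nonneg _))) hx

lemma exists_almost_critical_of_almost_minimizer_outside_ball [CompleteSpace X]
    (hφ : ∀ x, HasFDerivAt φ (φ' x) x) {R ε : ℝ} (hR : 0 ≤ R) (hε : 0 < ε) {w : X}
    (hw : 2 * R + 2 ≤ ‖w‖) (hmin : ∀ v, R ≤ ‖v‖ → φ w ≤ φ v + ε / 4) :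
    ∃ p, ‖w‖ / 2 ≤ ‖p‖ ∧ φ p ≤ φ w ∧ (1 + ‖p‖) * ‖φ' p‖ ≤ ε := by
  have hw₀ : 0 < ‖w‖ := by linarith
  have : CompleteSpace {v : X // R ≤ ‖v‖} :=
    (isClosed_le continuous_const continuous_norm).completeSpace_coe
  have hφc : Continuous φ := continuous_iff_continuousAt.2 fun x => (hφ x).continuousAt
  set σ := ε / (2 * ‖w‖) with hσ_def
  have hσ : 0 < σ := by positivity
  have hσw : 2 * ‖w‖ * σ = ε := by rw [hσ_def]; field_simp
  obtain ⟨p, hpw, hwp, hp⟩ := (hφc.comp continuous_subtype_val).lowerSemicontinuous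
    |>.exists_ekeland_point (m := φ w - ε / 4)
      (fun v : {v : X // R ≤ ‖v‖} => show φ w - ε / 4 ≤ φ v by linarith [hmin v v.2]) hσ
      ⟨w, by linarith⟩
  simp only [Function.comp_apply, Subtype.dist_eq] at hpw hwp hp
  have hwp' : dist w p ≤ ‖w‖ / 2 := by nlinarith
  have hp_lower : ‖w‖ / 2 ≤ ‖(p : X)‖ := by
    linarith [norm_sub_norm_le w p, dist_eq_norm w (p : X)]
  have hp_upper : ‖(p : X)‖ ≤ 3 * ‖w‖ / 2 := by
    linarith [norm_sub_norm_le (p : X) w, dist_eq_norm (p : X) w, dist_comm w (p : X)]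
  -- `p` minimizes `φ + σ ‖· - p‖` on the unit ball around `p`, which lies outside the `R`-ball
  have hderiv : ‖φ' p‖ ≤ σ := by
    refine (hφ p).norm_le_of_eventually_le_add_mul_norm hσ.le ?_
    filter_upwards [Metric.ball_mem_nhds (p : X) one_pos] with z hz
    have hzR : R ≤ ‖z‖ := by
      linarith [norm_sub_norm_le (p : X) z, dist_eq_norm (p : X) z, dist_comm z (p : X),
        Metric.mem_ball.1 hz]
    simpa [dist_eq_norm, norm_sub_rev] using hp ⟨z, hzR⟩
  refine ⟨p, hp_lower, hpw, ?_⟩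
  calc (1 + ‖(p : X)‖) * ‖φ' p‖ ≤ (1 + 3 * ‖w‖ / 2) * σ := by gcongr
    _ ≤ 2 * ‖w‖ * σ := by gcongr; linarith
    _ = ε := hσw

lemma exists_far_almost_critical [CompleteSpace X] (hφ : ∀ x, HasFDerivAt φ (φ' x) x)
    (hbdd : BddBelow (range φ)) {M : ℝ} (hfar : ∀ R, ∃ v, R ≤ ‖v‖ ∧ φ v ≤ M) {ε : ℝ}
    (hε : 0 < ε) (r : ℝ) : ∃ p, r ≤ ‖p‖ ∧ φ p ≤ M + ε ∧ (1 + ‖p‖) * ‖φ' p‖ ≤ ε := by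
  obtain ⟨R, hR, hW⟩ :=
    exists_far_almost_minimizers_outside_ball hbdd hfar (by positivity : 0 < ε / 4) 0
  obtain ⟨w, hwW, hwM, hwmin⟩ := hW (max (2 * R + 2) (2 * r))
  obtain ⟨p, hpw, hφp, hp⟩ := exists_almost_critical_of_almost_minimizer_outside_ball hφ hR hε
    ((le_max_left _ _).trans hwW) hwmin
  exact ⟨p, by linarith [le_max_right (2 * R + 2) (2 * r)], by linarith, hp⟩

lemma CeramiCondition.isBounded_sublevel [CompleteSpace X] (h : CeramiCondition φ φ')
    (hφ : ∀ x, HasFDerivAt φ (φ' x) x) (hbdd : BddBelow (range φ)) (M : ℝ) :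
    Bornology.IsBounded {x | φ x ≤ M} := by
  by_contra hunb
  have hfar : ∀ R, ∃ v, R ≤ ‖v‖ ∧ φ v ≤ M := fun R => by
    rw [isBounded_iff_forall_norm_le] at hunb
    push Not at hunb
    obtain ⟨v, hv, hvR⟩ := hunb R
    exact ⟨v, hvR.le, hv⟩
  obtain ⟨m, hm⟩ := hbdd
  have hp : ∀ n : ℕ, ∃ p, (n : ℝ) ≤ ‖p‖ ∧ φ p ≤ M + 1 / (n + 1) ∧
      (1 + ‖p‖) * ‖φ' p‖ ≤ 1 / (n + 1) := fun n =>
    exists_far_almost_critical hφ ⟨m, hm⟩ hfar Nat.one_div_pos_of_nat n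
  choose p hp_norm hp_le hp_crit using hp
  have hp_bdd : ∀ j, |φ (p j)| ≤ |m| + |M| + 1 := fun j => by
    have := hm ⟨p j, rfl⟩
    have : 1 / ((j : ℝ) + 1) ≤ 1 := Nat.one_div_le_one_div (Nat.zero_le j) |>.trans_eq (by simp)
    rw [abs_le]
    constructor <;> linarith [neg_abs_le m, le_abs_self M, abs_nonneg m, abs_nonneg M, hp_le j]
  obtain ⟨s, y, hs, hy⟩ := h p ⟨_, hp_bdd⟩ <|
    squeeze_zero (fun _ => by positivity) hp_crit tendsto_one_div_add_atTop_nhds_zero_nat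
  have hp_far : Tendsto (fun j => ‖p (s j)‖) atTop atTop :=
    tendsto_atTop_mono (fun j => (Nat.cast_le.2 hs.le_apply).trans (hp_norm (s j)))
      tendsto_natCast_atTop_atTop
  exact not_tendsto_nhds_of_tendsto_atTop hp_far _ hy.norm

lemma CeramiCondition.palaisSmaleCondition [CompleteSpace X] (h : CeramiCondition φ φ')
    (hφ : ∀ x, HasFDerivAt φ (φ' x) x) (hbdd : BddBelow (range φ)) :
    PalaisSmaleCondition φ φ' := by
  rintro x ⟨M, hM⟩ hx
  obtain ⟨C, hC⟩ := isBounded_iff_forall_norm_le.1 (h.isBounded_sublevel hφ hbdd M)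
  refine h x ⟨M, hM⟩ <| squeeze_zero (fun _ => by positivity) (fun j => ?_)
    (by simpa using hx.const_mul (1 + C))
  gcongr
  exact hC _ (abs_le.1 (hM j)).2

end Cerami

theorem stmt_8_general {X : Type*} [NormedAddCommGroup X] [NormedSpace ℝ X] [CompleteSpace X]
    (φ : X → ℝ) (φ' : X → X →L[ℝ] ℝ)
    (hdiff : ∀ x, HasFDerivAt φ (φ' x) x)
    (hbdd : BddBelow (Set.range φ)) :
    ((∀ x : ℕ → X, (∃ M : ℝ, ∀ j, |φ (x j)| ≤ M) →
        Tendsto (fun j => ‖φ' (x j)‖) atTop (𝓝 0) →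
        ∃ (s : ℕ → ℕ) (y : X), StrictMono s ∧ Tendsto (fun j => x (s j)) atTop (𝓝 y)) ↔
      (∀ x : ℕ → X, (∃ M : ℝ, ∀ j, |φ (x j)| ≤ M) →
        Tendsto (fun j => (1 + ‖x j‖) * ‖φ' (x j)‖) atTop (𝓝 0) →
        ∃ (s : ℕ → ℕ) (y : X), StrictMono s ∧ Tendsto (fun j => x (s j)) atTop (𝓝 y))) :=
  ⟨PalaisSmaleCondition.ceramiCondition, fun h => CeramiCondition.palaisSmaleCondition h hdiff hbdd⟩

/-- For a `C¹` functional `φ` on a Banach space `X` which is bounded below, the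
Palais–Smale condition holds if and only if the Cerami condition holds. -/
theorem stmt_8 {X : Type*} [NormedAddCommGroup X] [NormedSpace ℝ X] [CompleteSpace X]
    (φ : X → ℝ) (φ' : X → X →L[ℝ] ℝ)
    (hdiff : ∀ x, HasFDerivAt φ (φ' x) x)
    (hcont : Continuous φ')
    (hbdd : BddBelow (Set.range φ)) :
    ((∀ x : ℕ → X, (∃ M : ℝ, ∀ j, |φ (x j)| ≤ M) →
        Tendsto (fun j => ‖φ' (x j)‖) atTop (𝓝 0) →
        ∃ (s : ℕ → ℕ) (y : X), StrictMono s ∧ Tendsto (fun j => x (s j)) atTop (𝓝 y)) ↔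
      (∀ x : ℕ → X, (∃ M : ℝ, ∀ j, |φ (x j)| ≤ M) →
        Tendsto (fun j => (1 + ‖x j‖) * ‖φ' (x j)‖) atTop (𝓝 0) →
        ∃ (s : ℕ → ℕ) (y : X), StrictMono s ∧ Tendsto (fun j => x (s j)) atTop (𝓝 y))) :=
  stmt_8_general φ φ' hdiff hbdd
end

section
/- Let H be a Hilbert space, L, G : V → ℝ be C¹ functionals on an open neighborhood V of θ with L'(θ) = 0 and G'(θ) = 0. Assume ∇L has Gâteaux derivative B(u) = P(u) + Q(u) at every u ∈ V ∩ X satisfying Hypothesis 1.1, and G' has Gâteaux derivative G''(u) at every u ∈ V which is compact and continuous at θ in operator norm. If (λ*, θ) is a bifurcation point of the equation L'(u) = λ G'(u) — i.e., there exist (λ_k, u_k) with λ_k → λ*, u_k ≠ θ, u_k → θ, and L'(u_k) = λ_k G'(u_k) — then λ* is an eigenvalue of the linearized equation B(θ)v = λ* G''(θ)v, i.e., Ker(B(θ) - λ* G''(θ)) ≠ {0}. -/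
open scoped RealInnerProductSpace
open Filter Topology

/-- Mean value theorem for a Gâteaux-differentiable map along a segment, tested
against a fixed vector. -/
lemma mvt_gateaux {H : Type*} [NormedAddCommGroup H] [InnerProductSpace ℝ H]
    (x : H) (g : H → H) (A : ℝ → H)
    (hder : ∀ t ∈ Set.Icc (0:ℝ) 1,
      Tendsto (fun h : ℝ => h⁻¹ • (g ((t + h) • x) - g (t • x))) (𝓝[≠] (0:ℝ)) (𝓝 (A t)))
    (w : H) :
    ∃ c ∈ Set.Ioo (0:ℝ) 1, ⟪A c, w⟫ = ⟪g ((1:ℝ) • x), w⟫ - ⟪g ((0:ℝ) • x), w⟫ := by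
  have hg : ∀ t ∈ Set.Icc (0:ℝ) 1, HasDerivAt (fun s => g (s • x)) (A t) t := by
    intro t ht
    rw [hasDerivAt_iff_tendsto_slope_zero]
    refine (hder t ht).congr ?_
    intro h
    simp [add_smul]
  have hφ : ∀ t ∈ Set.Icc (0:ℝ) 1,
      HasDerivAt (fun s => ⟪g (s • x), w⟫) ⟪A t, w⟫ t := by
    intro t ht
    have := HasDerivAt.inner ℝ (hg t ht) (hasDerivAt_const t w)
    simpa using this
  have hcont : ContinuousOn (fun s : ℝ => ⟪g (s • x), w⟫) (Set.Icc (0:ℝ) 1) :=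
    fun t ht => (hφ t ht).continuousAt.continuousWithinAt
  obtain ⟨c, hc, hceq⟩ := exists_hasDerivAt_eq_slope (a := (0:ℝ)) (b := (1:ℝ))
    (fun s => ⟪g (s • x), w⟫) (fun t => ⟪A t, w⟫) one_pos hcont
    (fun t ht => hφ t (Set.mem_Icc_of_Ioo ht))
  exact ⟨c, hc, by simpa using hceq⟩

/-- A compact operator sends bounded weakly-null sequences to norm-null sequences. -/
lemma compact_apply_tendsto {H : Type*} [NormedAddCommGroup H] [InnerProductSpace ℝ H]
    [CompleteSpace H] (K : H →L[ℝ] H) (hK : IsCompactOperator K) (b : ℕ → H)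
    (hb : ∀ n, ‖b n‖ ≤ 1) (hw : ∀ w : H, Tendsto (fun n => ⟪b n, w⟫) atTop (𝓝 0)) :
    Tendsto (fun n => K (b n)) atTop (𝓝 0) := by
  obtain ⟨S, hScomp, hSmem⟩ := hK
  obtain ⟨r, hr, hballS⟩ := Metric.mem_nhds_iff.mp hSmem
  set S' : Set H := (fun y => (2 / r) • y) '' S with hS'def
  have hS' : IsCompact S' := hScomp.image (continuous_const_smul _)
  have hmem' : ∀ n, K (b n) ∈ S' := by
    intro n
    refine ⟨K ((r / 2) • b n), hballS ?_, ?_⟩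
    · rw [Metric.mem_ball, dist_zero_right, norm_smul, Real.norm_eq_abs]
      have h1 : |r / 2| * ‖b n‖ ≤ r / 2 * 1 := by
        rw [abs_of_pos (by linarith)]
        exact mul_le_mul_of_nonneg_left (hb n) (by linarith)
      nlinarith
    · show (2 / r) • K ((r / 2) • b n) = K (b n)
      rw [map_smul, smul_smul, show (2 / r) * (r / 2) = 1 by field_simp, one_smul]
  refine tendsto_of_subseq_tendsto ?_
  intro ns hns
  obtain ⟨L, hLmem, ms, hms, hconv⟩ := hS'.tendsto_subseq (fun n => hmem' (ns n))
  refine ⟨ms, ?_⟩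
  have hL0 : L = 0 := by
    have hall : ∀ w : H, ⟪L, w⟫ = 0 := by
      intro w
      have h1 : Tendsto (fun n => ⟪K (b (ns (ms n))), w⟫) atTop (𝓝 ⟪L, w⟫) :=
        (hconv.inner tendsto_const_nhds)
      have h2 : Tendsto (fun n => ⟪K (b (ns (ms n))), w⟫) atTop (𝓝 0) := by
        have heq : (fun n : ℕ => ⟪K (b (ns (ms n))), w⟫)
            = fun n => ⟪b (ns (ms n)), ContinuousLinearMap.adjoint K w⟫ := by
          funext n
          rw [ContinuousLinearMap.adjoint_inner_right]
        rw [heq]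
        exact (hw (ContinuousLinearMap.adjoint K w)).comp (hns.comp hms.tendsto_atTop)
      exact tendsto_nhds_unique h1 h2
    have := hall L
    rwa [inner_self_eq_zero] at this
  rwa [hL0] at hconv

/-- (Necessity of eigenvalues at bifurcation points.)  Let `L, G ∈ C¹(V,ℝ)` with vanishing
gradients at `θ`.  Assume the gradient `∇L` has Gâteaux derivative `B(u) = P(u) + Q(u)`
at every `u ∈ V` satisfying Hypothesis 1.1 with `X = H`, and `∇G` has Gâteaux derivative
`G''(u)` at every `u ∈ V` which is compact self-adjoint and continuous at `θ` in operator
norm.  If `(λ*, θ)` is a bifurcation point of `L'(u) = λ G'(u)`, then `λ*` is an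
eigenvalue of the linearization, i.e. `Ker(B(θ) - λ* G''(θ)) ≠ {0}`. -/
theorem stmt_12 {H : Type*} [NormedAddCommGroup H] [InnerProductSpace ℝ H] [CompleteSpace H]
    (V : Set H) (hVopen : IsOpen V) (hV0 : (0 : H) ∈ V)
    (L G : H → ℝ) (gL gG : H → H)
    (hLd : ∀ u ∈ V, HasGradientAt L (gL u) u) (hLc : ContinuousOn gL V)
    (hGd : ∀ u ∈ V, HasGradientAt G (gG u) u) (hGc : ContinuousOn gG V)
    (hL0 : gL 0 = 0) (hG0 : gG 0 = 0)
    (B P Q : H → H →L[ℝ] H)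
    (hBsa : ∀ u ∈ V, ∀ v w : H, ⟪B u v, w⟫ = ⟪v, B u w⟫)
    (hBgat : ∀ u ∈ V, ∀ v : H,
      Tendsto (fun t : ℝ => t⁻¹ • (gL (u + t • v) - gL u)) (𝓝[≠] (0:ℝ)) (𝓝 (B u v)))
    (hBPQ : ∀ u ∈ V, B u = P u + Q u)
    (hPpos : ∀ u ∈ V, ∀ v : H, v ≠ 0 → 0 < ⟪P u v, v⟫)
    (hQcpt : ∀ u ∈ V, IsCompactOperator (Q u))
    (hD2 : ∀ v : H, Tendsto (fun u => P u v) (𝓝 0) (𝓝 (P 0 v)))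
    (hD3 : Tendsto Q (𝓝 0) (𝓝 (Q 0)))
    (η₀ C₀' : ℝ) (hη₀ : 0 < η₀) (hC₀' : 0 < C₀') (hball : Metric.ball (0:H) η₀ ⊆ V)
    (hD4 : ∀ u ∈ Metric.ball (0:H) η₀, ∀ v : H, C₀' * ‖v‖ ^ 2 ≤ ⟪P u v, v⟫)
    (G'' : H → H →L[ℝ] H)
    (hG''sa : ∀ u ∈ V, ∀ v w : H, ⟪G'' u v, w⟫ = ⟪v, G'' u w⟫)
    (hG''gat : ∀ u ∈ V, ∀ v : H,
      Tendsto (fun t : ℝ => t⁻¹ • (gG (u + t • v) - gG u)) (𝓝[≠] (0:ℝ)) (𝓝 (G'' u v)))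
    (hG''cpt : ∀ u ∈ V, IsCompactOperator (G'' u))
    (hG''cont : Tendsto G'' (𝓝 0) (𝓝 (G'' 0)))
    (lamstar : ℝ) (lam : ℕ → ℝ) (u : ℕ → H)
    (hlam : Tendsto lam atTop (𝓝 lamstar)) (huto0 : Tendsto u atTop (𝓝 0))
    (hsol : ∀ k, u k ∈ V ∧ u k ≠ 0 ∧ gL (u k) = lam k • gG (u k)) :
    ∃ v : H, v ≠ 0 ∧ B 0 v = lamstar • G'' 0 v := by
  by_contra hcon
  push_neg at hcon
  set T : H →L[ℝ] H := B 0 - lamstar • G'' 0 with hTdef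
  have hTapp : ∀ z : H, T z = B 0 z - lamstar • G'' 0 z := fun z => rfl
  have hTsa : ∀ z w : H, ⟪T z, w⟫ = ⟪z, T w⟫ := by
    intro z w
    simp only [hTapp, inner_sub_left, inner_sub_right, real_inner_smul_left,
      real_inner_smul_right]
    rw [hBsa 0 hV0, hG''sa 0 hV0]
  have hTinj : ∀ z : H, T z = 0 → z = 0 := by
    intro z hz
    by_contra hne
    exact hcon z hne (by rw [← sub_eq_zero]; simpa [hTapp] using hz)
  -- pass to a tail where everything is inside the small ball
  obtain ⟨N, hN⟩ : ∃ N : ℕ, ∀ k ≥ N, ‖u k‖ < η₀ := by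
    have := Metric.tendsto_atTop.mp huto0 η₀ hη₀
    simpa [dist_zero_right] using this
  set u' : ℕ → H := fun k => u (k + N) with hu'def
  set lam' : ℕ → ℝ := fun k => lam (k + N) with hlam'def
  have htail : Tendsto (fun k : ℕ => k + N) atTop atTop := tendsto_add_atTop_nat N
  have hu' : Tendsto u' atTop (𝓝 0) := huto0.comp htail
  have hlam'' : Tendsto lam' atTop (𝓝 lamstar) := hlam.comp htail
  have hsmall : ∀ k, ‖u' k‖ < η₀ := fun k => hN _ (Nat.le_add_left N k)
  have hne : ∀ k, u' k ≠ 0 := fun k => (hsol (k + N)).2.1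
  have hequ : ∀ k, gL (u' k) = lam' k • gG (u' k) := fun k => (hsol (k + N)).2.2
  have hnorm_ne : ∀ k, ‖u' k‖ ≠ 0 := fun k => norm_ne_zero_iff.mpr (hne k)
  set v : ℕ → H := fun k => ‖u' k‖⁻¹ • u' k with hvdef
  have hv1 : ∀ k, ‖v k‖ = 1 := by
    intro k
    simp only [hvdef, norm_smul, norm_inv, norm_norm]
    field_simp
    exact div_self (hnorm_ne k)
  have hseg : ∀ k, ∀ t : ℝ, |t| ≤ 1 → t • u' k ∈ Metric.ball (0:H) η₀ := by
    intro k t ht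
    rw [Metric.mem_ball, dist_zero_right, norm_smul, Real.norm_eq_abs]
    calc |t| * ‖u' k‖ ≤ 1 * ‖u' k‖ := by
          exact mul_le_mul_of_nonneg_right ht (norm_nonneg _)
      _ = ‖u' k‖ := one_mul _
      _ < η₀ := hsmall k
  -- key mean value identity
  have hMVT : ∀ (k : ℕ) (w : H), ∃ c ∈ Set.Ioo (0:ℝ) 1,
      ⟪B (c • u' k) (v k), w⟫ = lam' k * ⟪G'' (c • u' k) (v k), w⟫ := by
    intro k w
    have hder : ∀ t ∈ Set.Icc (0:ℝ) 1,
        Tendsto (fun h : ℝ => h⁻¹ • ((fun y => gL y - lam' k • gG y) ((t + h) • u' k)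
          - (fun y => gL y - lam' k • gG y) (t • u' k))) (𝓝[≠] (0:ℝ))
          (𝓝 (B (t • u' k) (u' k) - lam' k • G'' (t • u' k) (u' k))) := by
      intro t ht
      have htV : t • u' k ∈ V := by
        refine hball (hseg k t ?_)
        rw [abs_of_nonneg ht.1]; exact ht.2
      have h1 := hBgat _ htV (u' k)
      have h2 := (hG''gat _ htV (u' k)).const_smul (lam' k)
      refine (h1.sub h2).congr ?_
      intro h
      simp only [add_smul]
      module
    obtain ⟨c, hc, hkey⟩ := mvt_gateaux (u' k) (fun y => gL y - lam' k • gG y)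
      (fun t => B (t • u' k) (u' k) - lam' k • G'' (t • u' k) (u' k)) hder w
    refine ⟨c, hc, ?_⟩
    have hz1 : gL ((1:ℝ) • u' k) - lam' k • gG ((1:ℝ) • u' k) = 0 := by
      rw [one_smul, hequ k, sub_self]
    have hz0 : gL ((0:ℝ) • u' k) - lam' k • gG ((0:ℝ) • u' k) = 0 := by
      rw [zero_smul, hL0, hG0, smul_zero, sub_self]
    simp only [hz1, hz0, inner_zero_left, sub_zero] at hkey
    -- hkey : ⟪B (c•u'k)(u'k) - lam'k • G''(c•u'k)(u'k), w⟫ = 0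
    have hx : ‖u' k‖ • v k = u' k := smul_inv_smul₀ (hnorm_ne k) _
    have e1 : B (c • u' k) (u' k) = ‖u' k‖ • B (c • u' k) (v k) := by
      have h := map_smul (B (c • u' k)) (‖u' k‖) (v k)
      rw [hx] at h
      exact h
    have e2 : G'' (c • u' k) (u' k) = ‖u' k‖ • G'' (c • u' k) (v k) := by
      have h := map_smul (G'' (c • u' k)) (‖u' k‖) (v k)
      rw [hx] at h
      exact h
    rw [e1, e2, inner_sub_left] at hkey
    rw [real_inner_smul_left] at hkey
    rw [smul_comm, real_inner_smul_left, real_inner_smul_left] at hkey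
    have h' : ‖u' k‖ * (⟪B (c • u' k) (v k), w⟫ - lam' k * ⟪G'' (c • u' k) (v k), w⟫) = 0 := by
      rw [mul_sub]
      linarith [hkey]
    rcases mul_eq_zero.mp h' with h0 | h0
    · exact absurd h0 (hnorm_ne k)
    · linarith [h0]
  -- helper bound
  have hinb : ∀ (k : ℕ) (z : H), ‖(⟪v k, z⟫ : ℝ)‖ ≤ ‖z‖ := by
    intro k z
    rw [Real.norm_eq_abs]
    calc |(⟪v k, z⟫ : ℝ)| ≤ ‖v k‖ * ‖z‖ := abs_real_inner_le_norm _ _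
      _ = ‖z‖ := by rw [hv1 k, one_mul]
  -- weak convergence of T (v k) to 0
  have hTweak : ∀ w : H, Tendsto (fun k => (⟪T (v k), w⟫ : ℝ)) atTop (𝓝 0) := by
    intro w
    choose c hcIoo hE using fun k => hMVT k w
    set y : ℕ → H := fun k => c k • u' k with hydef
    have hynorm : ∀ k, ‖y k‖ ≤ ‖u' k‖ := by
      intro k
      rw [hydef]
      rw [norm_smul, Real.norm_eq_abs, abs_of_pos (hcIoo k).1]
      exact mul_le_of_le_one_left (norm_nonneg _) (le_of_lt (hcIoo k).2)
    have hy0 : Tendsto y atTop (𝓝 0) :=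
      squeeze_zero_norm hynorm (by simpa using hu'.norm)
    have hyB : ∀ k, y k ∈ Metric.ball (0:H) η₀ := by
      intro k
      rw [Metric.mem_ball, dist_zero_right]
      exact lt_of_le_of_lt (hynorm k) (hsmall k)
    have hyV : ∀ k, y k ∈ V := fun k => hball (hyB k)
    have key : ∀ k, (⟪T (v k), w⟫ : ℝ) =
        ⟪v k, P 0 w - P (y k) w⟫ + ⟪v k, Q 0 w - Q (y k) w⟫
        + lam' k * ⟪v k, G'' (y k) w - G'' 0 w⟫ + (lam' k - lamstar) * ⟪v k, G'' 0 w⟫ := by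
      intro k
      have hBzero : (⟪B 0 (v k), w⟫ : ℝ) = ⟪v k, B 0 w⟫ := hBsa 0 hV0 _ _
      have hBy : (⟪B (y k) (v k), w⟫ : ℝ) = ⟪v k, B (y k) w⟫ := hBsa _ (hyV k) _ _
      have hGy : (⟪G'' (y k) (v k), w⟫ : ℝ) = ⟪v k, G'' (y k) w⟫ := hG''sa _ (hyV k) _ _
      have hGzero : (⟪G'' 0 (v k), w⟫ : ℝ) = ⟪v k, G'' 0 w⟫ := hG''sa 0 hV0 _ _
      have hb0 : B 0 w = P 0 w + Q 0 w := by rw [hBPQ 0 hV0]; rfl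
      have hby : B (y k) w = P (y k) w + Q (y k) w := by rw [hBPQ _ (hyV k)]; rfl
      have hE' : (⟪v k, B (y k) w⟫ : ℝ) = lam' k * ⟪v k, G'' (y k) w⟫ := by
        rw [← hBy, ← hGy]; exact hE k
      have hsplit0 : (⟪v k, B 0 w⟫ : ℝ) = ⟪v k, P 0 w⟫ + ⟪v k, Q 0 w⟫ := by
        rw [hb0, inner_add_right]
      have hsplity : (⟪v k, B (y k) w⟫ : ℝ) = ⟪v k, P (y k) w⟫ + ⟪v k, Q (y k) w⟫ := by
        rw [hby, inner_add_right]
      rw [hsplity] at hE'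
      have hTval : (⟪T (v k), w⟫ : ℝ) = ⟪v k, B 0 w⟫ - lamstar * ⟪v k, G'' 0 w⟫ := by
        rw [hTapp, inner_sub_left, real_inner_smul_left, hBzero, hGzero]
      rw [hTval, hsplit0]
      simp only [inner_sub_right]
      linear_combination hE'
    have hT1 : Tendsto (fun k => (⟪v k, P 0 w - P (y k) w⟫ : ℝ)) atTop (𝓝 0) := by
      refine squeeze_zero_norm (fun k => hinb k _) ?_
      have hP : Tendsto (fun k => P (y k) w) atTop (𝓝 (P 0 w)) := (hD2 w).comp hy0
      simpa using ((tendsto_const_nhds : Tendsto (fun _ : ℕ => P 0 w) atTop (𝓝 (P 0 w))).sub hP).norm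
    have hQop : Tendsto (fun k => ‖Q 0 - Q (y k)‖) atTop (𝓝 0) := by
      simpa using ((tendsto_const_nhds : Tendsto (fun _ : ℕ => Q 0) atTop (𝓝 (Q 0))).sub (hD3.comp hy0)).norm
    have hT2 : Tendsto (fun k => (⟪v k, Q 0 w - Q (y k) w⟫ : ℝ)) atTop (𝓝 0) := by
      have hlim : Tendsto (fun k => ‖Q 0 - Q (y k)‖ * ‖w‖) atTop (𝓝 0) := by
        have := hQop.mul (tendsto_const_nhds : Tendsto (fun _ : ℕ => ‖w‖) atTop (𝓝 (‖w‖)))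
        simpa using this
      refine squeeze_zero_norm (fun k => ?_) hlim
      calc ‖(⟪v k, Q 0 w - Q (y k) w⟫ : ℝ)‖ ≤ ‖Q 0 w - Q (y k) w‖ := hinb k _
        _ = ‖(Q 0 - Q (y k)) w‖ := by rw [ContinuousLinearMap.sub_apply]
        _ ≤ ‖Q 0 - Q (y k)‖ * ‖w‖ := ContinuousLinearMap.le_opNorm _ _
    have hGop : Tendsto (fun k => ‖G'' (y k) - G'' 0‖) atTop (𝓝 0) := by
      simpa using ((hG''cont.comp hy0).sub (tendsto_const_nhds : Tendsto (fun _ : ℕ => G'' 0) atTop (𝓝 (G'' 0)))).norm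
    have hT3 : Tendsto (fun k => lam' k * (⟪v k, G'' (y k) w - G'' 0 w⟫ : ℝ)) atTop (𝓝 0) := by
      have hlim : Tendsto (fun k => |lam' k| * (‖G'' (y k) - G'' 0‖ * ‖w‖)) atTop (𝓝 0) := by
        have := hlam''.abs.mul (hGop.mul
          (tendsto_const_nhds : Tendsto (fun _ : ℕ => ‖w‖) atTop (𝓝 (‖w‖))))
        simpa using this
      refine squeeze_zero_norm (fun k => ?_) hlim
      rw [norm_mul, Real.norm_eq_abs (lam' k)]
      refine mul_le_mul_of_nonneg_left ?_ (abs_nonneg _)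
      calc ‖(⟪v k, G'' (y k) w - G'' 0 w⟫ : ℝ)‖ ≤ ‖G'' (y k) w - G'' 0 w‖ := hinb k _
        _ = ‖(G'' (y k) - G'' 0) w‖ := by rw [ContinuousLinearMap.sub_apply]
        _ ≤ ‖G'' (y k) - G'' 0‖ * ‖w‖ := ContinuousLinearMap.le_opNorm _ _
    have hT4 : Tendsto (fun k => (lam' k - lamstar) * (⟪v k, G'' 0 w⟫ : ℝ)) atTop (𝓝 0) := by
      have hlim : Tendsto (fun k => |lam' k - lamstar| * ‖G'' 0 w‖) atTop (𝓝 0) := by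
        have := ((hlam''.sub (tendsto_const_nhds :
          Tendsto (fun _ : ℕ => lamstar) atTop (𝓝 lamstar))).abs.mul
          (tendsto_const_nhds : Tendsto (fun _ : ℕ => ‖G'' 0 w‖) atTop (𝓝 (‖G'' 0 w‖))))
        simpa using this
      refine squeeze_zero_norm (fun k => ?_) hlim
      rw [norm_mul, Real.norm_eq_abs (lam' k - lamstar)]
      exact mul_le_mul_of_nonneg_left (hinb k _) (abs_nonneg _)
    have := ((hT1.add hT2).add hT3).add hT4
    simp only [add_zero] at this
    exact this.congr (fun k => (key k).symm)
  -- density of the range of T gives weak convergence of v k to 0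
  have hweak : ∀ w : H, Tendsto (fun k => (⟪v k, w⟫ : ℝ)) atTop (𝓝 0) := by
    have hdense : ∀ z : H, z ∈ closure (Set.range fun x => T x) := by
      set K : Submodule ℝ H := LinearMap.range (T : H →ₗ[ℝ] H) with hKdef
      have hKbot : Kᗮ = ⊥ := by
        rw [Submodule.eq_bot_iff]
        intro w hw
        have hzero : ∀ z : H, (⟪T z, w⟫ : ℝ) = 0 := by
          intro z
          exact (Submodule.mem_orthogonal K w).mp hw (T z) (LinearMap.mem_range.mpr ⟨z, rfl⟩)
        have hTw : T w = 0 := by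
          have h := hzero (T w)
          rw [hTsa] at h
          exact inner_self_eq_zero.mp h
        exact hTinj w hTw
      have hKtop : K.topologicalClosure = ⊤ := Submodule.topologicalClosure_eq_top_iff.mpr hKbot
      intro z
      have hz : z ∈ (K.topologicalClosure : Set H) := by rw [hKtop]; trivial
      rw [Submodule.topologicalClosure_coe] at hz
      have : (K : Set H) = Set.range fun x => T x := by
        ext a
        simp [hKdef, LinearMap.mem_range, eq_comm]
      rwa [this] at hz
    intro w
    rw [Metric.tendsto_atTop]
    intro ε hε
    obtain ⟨z', hz'mem, hz'd⟩ := Metric.mem_closure_iff.mp (hdense w) (ε/2) (by linarith)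
    obtain ⟨z, rfl⟩ := Set.mem_range.mp hz'mem
    obtain ⟨M, hM⟩ := Metric.tendsto_atTop.mp (hTweak z) (ε/2) (by linarith)
    refine ⟨M, fun k hk => ?_⟩
    have h1 := hM k hk
    rw [Real.dist_eq, sub_zero] at h1 ⊢
    have hsplit : (⟪v k, w⟫ : ℝ) = ⟪v k, w - T z⟫ + ⟪v k, T z⟫ := by
      rw [inner_sub_right]; ring
    rw [hsplit]
    calc |(⟪v k, w - T z⟫ : ℝ) + ⟪v k, T z⟫| ≤ |(⟪v k, w - T z⟫ : ℝ)| + |(⟪v k, T z⟫ : ℝ)| :=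
        abs_add_le _ _
      _ < ε / 2 + ε / 2 := by
          refine add_lt_add_of_le_of_lt ?_ ?_
          · calc |(⟪v k, w - T z⟫ : ℝ)| ≤ ‖w - T z‖ := by
                  simpa [Real.norm_eq_abs] using hinb k (w - T z)
              _ = dist w (T z) := (dist_eq_norm w (T z)).symm
              _ ≤ ε / 2 := le_of_lt hz'd
          · rw [← hTsa]
            exact h1
      _ = ε := by ring
  -- compact operators send v k to norm-null sequences
  have hQnull : Tendsto (fun k => Q 0 (v k)) atTop (𝓝 0) :=
    compact_apply_tendsto (Q 0) (hQcpt 0 hV0) v (fun k => le_of_eq (hv1 k)) hweak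
  have hGnull : Tendsto (fun k => G'' 0 (v k)) atTop (𝓝 0) :=
    compact_apply_tendsto (G'' 0) (hG''cpt 0 hV0) v (fun k => le_of_eq (hv1 k)) hweak
  -- final contradiction via uniform positivity
  choose c hcIoo hE using fun k => hMVT k (v k)
  set y : ℕ → H := fun k => c k • u' k with hydef
  have hynorm : ∀ k, ‖y k‖ ≤ ‖u' k‖ := by
    intro k
    rw [hydef, norm_smul, Real.norm_eq_abs, abs_of_pos (hcIoo k).1]
    exact mul_le_of_le_one_left (norm_nonneg _) (le_of_lt (hcIoo k).2)
  have hy0 : Tendsto y atTop (𝓝 0) :=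
    squeeze_zero_norm hynorm (by simpa using hu'.norm)
  have hyB : ∀ k, y k ∈ Metric.ball (0:H) η₀ := by
    intro k
    rw [Metric.mem_ball, dist_zero_right]
    exact lt_of_le_of_lt (hynorm k) (hsmall k)
  have hyV : ∀ k, y k ∈ V := fun k => hball (hyB k)
  have hinb' : ∀ (k : ℕ) (z : H), ‖(⟪z, v k⟫ : ℝ)‖ ≤ ‖z‖ := by
    intro k z
    rw [real_inner_comm]
    exact hinb k z
  have hlow : ∀ k, C₀' ≤ lam' k * ⟪G'' (y k) (v k), v k⟫ - ⟪Q (y k) (v k), v k⟫ := by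
    intro k
    have h4 := hD4 (y k) (hyB k) (v k)
    rw [hv1 k, one_pow, mul_one] at h4
    have hsplit : (⟪B (y k) (v k), v k⟫ : ℝ)
        = ⟪P (y k) (v k), v k⟫ + ⟪Q (y k) (v k), v k⟫ := by
      rw [hBPQ _ (hyV k)]
      rw [ContinuousLinearMap.add_apply, inner_add_left]
    have hEk := hE k
    linarith
  have hR : Tendsto (fun k => lam' k * (⟪G'' (y k) (v k), v k⟫ : ℝ)
      - ⟪Q (y k) (v k), v k⟫) atTop (𝓝 0) := by
    have hGop : Tendsto (fun k => ‖G'' (y k) - G'' 0‖) atTop (𝓝 0) := by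
      simpa using ((hG''cont.comp hy0).sub (tendsto_const_nhds :
        Tendsto (fun _ : ℕ => G'' 0) atTop (𝓝 (G'' 0)))).norm
    have hQop : Tendsto (fun k => ‖Q (y k) - Q 0‖) atTop (𝓝 0) := by
      simpa using ((hD3.comp hy0).sub (tendsto_const_nhds :
        Tendsto (fun _ : ℕ => Q 0) atTop (𝓝 (Q 0)))).norm
    have hd1 : Tendsto (fun k => lam' k * (⟪(G'' (y k) - G'' 0) (v k), v k⟫ : ℝ)) atTop (𝓝 0) := by
      have hlim : Tendsto (fun k => |lam' k| * ‖G'' (y k) - G'' 0‖) atTop (𝓝 0) := by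
        have := hlam''.abs.mul hGop
        simpa using this
      refine squeeze_zero_norm (fun k => ?_) hlim
      rw [norm_mul, Real.norm_eq_abs (lam' k)]
      refine mul_le_mul_of_nonneg_left ?_ (abs_nonneg _)
      calc ‖(⟪(G'' (y k) - G'' 0) (v k), v k⟫ : ℝ)‖ ≤ ‖(G'' (y k) - G'' 0) (v k)‖ := hinb' k _
        _ ≤ ‖G'' (y k) - G'' 0‖ * ‖v k‖ := ContinuousLinearMap.le_opNorm _ _
        _ = ‖G'' (y k) - G'' 0‖ := by rw [hv1 k, mul_one]
    have hd2 : Tendsto (fun k => lam' k * (⟪G'' 0 (v k), v k⟫ : ℝ)) atTop (𝓝 0) := by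
      have hlim : Tendsto (fun k => |lam' k| * ‖G'' 0 (v k)‖) atTop (𝓝 0) := by
        have := hlam''.abs.mul (by simpa using hGnull.norm :
          Tendsto (fun k => ‖G'' 0 (v k)‖) atTop (𝓝 0))
        simpa using this
      refine squeeze_zero_norm (fun k => ?_) hlim
      rw [norm_mul, Real.norm_eq_abs (lam' k)]
      exact mul_le_mul_of_nonneg_left (hinb' k _) (abs_nonneg _)
    have hd3 : Tendsto (fun k => (⟪(Q (y k) - Q 0) (v k), v k⟫ : ℝ)) atTop (𝓝 0) := by
      refine squeeze_zero_norm (fun k => ?_) hQop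
      calc ‖(⟪(Q (y k) - Q 0) (v k), v k⟫ : ℝ)‖ ≤ ‖(Q (y k) - Q 0) (v k)‖ := hinb' k _
        _ ≤ ‖Q (y k) - Q 0‖ * ‖v k‖ := ContinuousLinearMap.le_opNorm _ _
        _ = ‖Q (y k) - Q 0‖ := by rw [hv1 k, mul_one]
    have hd4 : Tendsto (fun k => (⟪Q 0 (v k), v k⟫ : ℝ)) atTop (𝓝 0) := by
      refine squeeze_zero_norm (fun k => ?_)
        (by simpa using hQnull.norm : Tendsto (fun k => ‖Q 0 (v k)‖) atTop (𝓝 0))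
      exact hinb' k _
    have hcomb := ((hd1.add hd2).sub hd3).sub hd4
    simp only [add_zero, sub_zero] at hcomb
    refine hcomb.congr (fun k => ?_)
    have eG : (⟪G'' (y k) (v k), v k⟫ : ℝ)
        = ⟪(G'' (y k) - G'' 0) (v k), v k⟫ + ⟪G'' 0 (v k), v k⟫ := by
      rw [ContinuousLinearMap.sub_apply, inner_sub_left]
      ring
    have eQ : (⟪Q (y k) (v k), v k⟫ : ℝ)
        = ⟪(Q (y k) - Q 0) (v k), v k⟫ + ⟪Q 0 (v k), v k⟫ := by
      rw [ContinuousLinearMap.sub_apply, inner_sub_left]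
      ring
    rw [eG, eQ]
    ring
  have : C₀' ≤ 0 := ge_of_tendsto' hR hlow
  linarith
end

section
/- Under the setting of the previous theorem (bifurcation necessity), let (u_k) be nonzero solutions of L'(u_k) = λ_k G'(u_k) with u_k → θ, λ_k → λ*, and set v_k = u_k/‖u_k‖. If v_k ⇀ v* weakly, then for any h ∈ H, (1/‖u_k‖)(∇L(u_k), h) → (v*, B(θ)h) and (λ_k/‖u_k‖)(∇G(u_k), h) → λ* (G''(θ)v*, h), so that B(θ)v* = λ* G''(θ)v*; moreover C₀' ≤ ((λ* G''(θ) - Q(θ)) v*, v*) and hence v* ≠ θ. -/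
/-!
The mean value theorem along `[0, u_k]` gives `(∇L(u_k), h) = (B(w_k) u_k, h)` with
`‖w_k‖ ≤ ‖u_k‖`, so by self-adjointness `‖u_k‖⁻¹ (∇L(u_k), h) = (v_k, B(w_k) h)`: a bounded weakly
convergent sequence paired with a strongly convergent one, hence convergent to `(v*, B(θ) h)`;
likewise for `G`, and the two limits agree because `u_k` solves the equation.
Testing the equation against `v_k` instead gives
`(P(w_k) v_k, v_k) = ((λ_k G''(w'_k) - Q(w_k)) v_k, v_k)`. The left side is at least `C₀'`, and
since the operators on the right converge in norm to a compact operator, which maps `v_k ⇀ v*`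
to a strongly convergent sequence, the right side tends to `((λ* G''(θ) - Q(θ)) v*, v*)`.
-/

open scoped RealInnerProductSpace
open Filter Topology

section WeakConvergence

variable {E : Type*} [NormedAddCommGroup E] [InnerProductSpace ℝ E] {ι : Type*} {l : Filter ι}

theorem norm_inv_norm_smul_le_one (x : E) : ‖‖x‖⁻¹ • x‖ ≤ 1 := by
  rcases eq_or_ne x 0 with rfl | hx
  · simp
  · exact (norm_smul_inv_norm hx).le

theorem tendsto_inner_of_weak_of_tendsto {b a : ι → E} {b₀ a₀ : E} {c : ℝ}
    (hb : ∀ w, Tendsto (fun i => ⟪b i, w⟫) l (𝓝 ⟪b₀, w⟫)) (hbc : ∀ i, ‖b i‖ ≤ c)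
    (ha : Tendsto a l (𝓝 a₀)) : Tendsto (fun i => ⟪b i, a i⟫) l (𝓝 ⟪b₀, a₀⟫) := by
  have hsmall : Tendsto (fun i => ⟪b i, a i - a₀⟫) l (𝓝 0) := by
    refine squeeze_zero_norm (fun i => ?_)
      (by simpa using (tendsto_sub_nhds_zero_iff.2 ha).norm.const_mul c)
    calc ‖⟪b i, a i - a₀⟫‖ ≤ ‖b i‖ * ‖a i - a₀‖ := norm_inner_le_norm _ _
      _ ≤ c * ‖a i - a₀‖ := mul_le_mul_of_nonneg_right (hbc i) (norm_nonneg _)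
  simpa [inner_sub_right] using (hb a₀).add hsmall

theorem IsCompactOperator.tendsto_apply_of_weak [CompleteSpace E] {T : E →L[ℝ] E}
    (hT : IsCompactOperator T) {v : ι → E} {v₀ : E} {c : ℝ}
    (hv : ∀ w, Tendsto (fun i => ⟪v i, w⟫) l (𝓝 ⟪v₀, w⟫)) (hvc : ∀ i, ‖v i‖ ≤ c) :
    Tendsto (fun i => T (v i)) l (𝓝 (T v₀)) := by
  have hTv : ∀ w, Tendsto (fun i => ⟪T (v i), w⟫) l (𝓝 ⟪T v₀, w⟫) := fun w => by
    simpa only [ContinuousLinearMap.adjoint_inner_right] using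
      hv (ContinuousLinearMap.adjoint T w)
  refine (hT.isCompact_closure_image_closedBall c).tendsto_nhds_of_unique_mapClusterPt
    (Eventually.of_forall fun i => subset_closure ⟨v i, by simpa using hvc i, rfl⟩)
    fun x _ hx => ext_inner_right ℝ fun w => eq_of_nhds_neBot ?_
  have hxw : MapClusterPt ⟪x, w⟫ l (fun i => ⟪T (v i), w⟫) :=
    hx.tendsto_comp ((continuous_id.inner continuous_const).tendsto x)
  exact (hxw.clusterPt.mono (hTv w)).neBot

theorem IsCompactOperator.tendsto_inner_apply_self [CompleteSpace E] {T : E →L[ℝ] E}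
    (hT : IsCompactOperator T) {S : ι → E →L[ℝ] E} (hS : Tendsto S l (𝓝 T)) {v : ι → E} {v₀ : E}
    {c : ℝ} (hv : ∀ w, Tendsto (fun i => ⟪v i, w⟫) l (𝓝 ⟪v₀, w⟫)) (hvc : ∀ i, ‖v i‖ ≤ c) :
    Tendsto (fun i => ⟪S i (v i), v i⟫) l (𝓝 ⟪T v₀, v₀⟫) := by
  have hSv : Tendsto (fun i => S i (v i) - T (v i)) l (𝓝 0) := by
    refine squeeze_zero_norm (fun i => ?_)
      (by simpa using (tendsto_sub_nhds_zero_iff.2 hS).norm.mul_const c)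
    calc ‖S i (v i) - T (v i)‖ = ‖(S i - T) (v i)‖ := rfl
      _ ≤ ‖S i - T‖ * ‖v i‖ := (S i - T).le_opNorm _
      _ ≤ ‖S i - T‖ * c := mul_le_mul_of_nonneg_left (hvc i) (norm_nonneg _)
  have hSv' : Tendsto (fun i => S i (v i)) l (𝓝 (T v₀)) := by
    simpa using hSv.add (hT.tendsto_apply_of_weak hv hvc)
  simpa only [real_inner_comm] using tendsto_inner_of_weak_of_tendsto hv hvc hSv'

end WeakConvergence

section MeanValue

variable {E F : Type*} [NormedAddCommGroup E] [NormedSpace ℝ E]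
  [NormedAddCommGroup F] [InnerProductSpace ℝ F]

theorem HasLineDerivAt.hasDerivAt_smul {g : E → F} {g' : F} {u : E} {t : ℝ}
    (hg : HasLineDerivAt ℝ g g' (t • u) u) : HasDerivAt (fun s : ℝ => g (s • u)) g' t := by
  have hg' : HasDerivAt (fun s : ℝ => g (t • u + s • u)) g' (t - t) := by rw [sub_self]; exact hg
  simpa [← add_smul] using hg'.comp_sub_const t t

theorem exists_mem_Ioo_inner_sub_eq {g : E → F} {g' : ℝ → F} {u : E} (h : F)
    (hc : ContinuousOn (fun t : ℝ => g (t • u)) (Set.Icc 0 1))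
    (hd : ∀ t ∈ Set.Ioo (0 : ℝ) 1, HasLineDerivAt ℝ g (g' t) (t • u) u) :
    ∃ τ ∈ Set.Ioo (0 : ℝ) 1, ⟪g u - g 0, h⟫ = ⟪g' τ, h⟫ := by
  obtain ⟨τ, hτ, heq⟩ := exists_hasDerivAt_eq_slope (fun t : ℝ => ⟪g (t • u), h⟫)
    (fun t => ⟪g' t, h⟫) one_pos (hc.inner continuousOn_const)
    fun t ht => by simpa using (hd t ht).hasDerivAt_smul.inner ℝ (hasDerivAt_const t h)
  refine ⟨τ, hτ, ?_⟩
  simpa [inner_sub_left] using heq.symm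

theorem exists_norm_le_inner_eq_of_hasLineDerivAt {V : Set E} {g : E → F} {T : E → E →L[ℝ] F}
    (hgc : ContinuousOn g V) (hgd : ∀ x ∈ V, ∀ y, HasLineDerivAt ℝ g (T x y) x y) (hg0 : g 0 = 0)
    {u : E} (hu : ∀ t ∈ Set.Icc (0 : ℝ) 1, t • u ∈ V) (h : F) :
    ∃ w : E, ‖w‖ ≤ ‖u‖ ∧ ⟪g u, h⟫ = ⟪T w u, h⟫ := by
  obtain ⟨τ, hτ, heq⟩ := exists_mem_Ioo_inner_sub_eq h
    (hgc.comp (continuous_id.smul continuous_const).continuousOn hu)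
    fun t ht => hgd _ (hu t (Set.Ioo_subset_Icc_self ht)) u
  refine ⟨τ • u, ?_, by simpa [hg0] using heq⟩
  rw [norm_smul, Real.norm_of_nonneg hτ.1.le]
  exact mul_le_of_le_one_left (norm_nonneg _) hτ.2.le

theorem exists_tendsto_zero_inv_norm_mul_inner_eq {ι : Type*} {l : Filter ι} {V : Set E}
    (hV : V ∈ 𝓝 0) {g : E → F} {T : E → E →L[ℝ] F} (hgc : ContinuousOn g V)
    (hgd : ∀ x ∈ V, ∀ y, HasLineDerivAt ℝ g (T x y) x y) (hg0 : g 0 = 0) {u : ι → E}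
    (hu : Tendsto u l (𝓝 0)) (h : ι → F) :
    ∃ w : ι → E, Tendsto w l (𝓝 0) ∧
      ∀ᶠ i in l, ‖u i‖⁻¹ * ⟪g (u i), h i⟫ = ⟪T (w i) (‖u i‖⁻¹ • u i), h i⟫ := by
  obtain ⟨r, hr, hball⟩ := Metric.mem_nhds_iff.1 hV
  have hw : ∀ i, ∃ w : E, ‖w‖ ≤ ‖u i‖ ∧ (‖u i‖ < r → ⟪g (u i), h i⟫ = ⟪T w (u i), h i⟫) := by
    intro i
    by_cases hi : ‖u i‖ < r
    · have hseg : ∀ t ∈ Set.Icc (0 : ℝ) 1, t • u i ∈ V := fun t ht => hball <| by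
        rw [mem_ball_zero_iff, norm_smul, Real.norm_of_nonneg ht.1]
        exact (mul_le_of_le_one_left (norm_nonneg _) ht.2).trans_lt hi
      obtain ⟨w, hwu, heq⟩ := exists_norm_le_inner_eq_of_hasLineDerivAt hgc hgd hg0 hseg (h i)
      exact ⟨w, hwu, fun _ => heq⟩
    · exact ⟨0, by simp, fun hi' => absurd hi' hi⟩
  choose w hwu heq using hw
  refine ⟨w, squeeze_zero_norm hwu (by simpa using hu.norm), ?_⟩
  filter_upwards [hu.eventually (Metric.ball_mem_nhds 0 hr)] with i hi
  rw [heq i (mem_ball_zero_iff.1 hi), map_smul, real_inner_smul_left]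

end MeanValue

theorem tendsto_apply_nhds_of_eq_add {X F : Type*} [TopologicalSpace X] [NormedAddCommGroup F]
    [NormedSpace ℝ F] {x₀ : X} {V : Set X} (hV : V ∈ 𝓝 x₀) {B P Q : X → F →L[ℝ] F}
    (hBPQ : ∀ x ∈ V, B x = P x + Q x) (hP : ∀ z, Tendsto (fun x => P x z) (𝓝 x₀) (𝓝 (P x₀ z)))
    (hQ : Tendsto Q (𝓝 x₀) (𝓝 (Q x₀))) (z : F) :
    Tendsto (fun x => B x z) (𝓝 x₀) (𝓝 (B x₀ z)) := by
  rw [hBPQ x₀ (mem_of_mem_nhds hV)]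
  have hQz := ((ContinuousLinearMap.apply ℝ F z).continuous.tendsto _).comp hQ
  refine ((hP z).add hQz).congr' ?_
  filter_upwards [hV] with x hx
  rw [hBPQ x hx]
  rfl

section Bifurcation

variable {E : Type*} [NormedAddCommGroup E] [InnerProductSpace ℝ E] {ι : Type*} {l : Filter ι}

theorem tendsto_inv_norm_mul_inner_of_hasLineDerivAt {V : Set E} (hV : V ∈ 𝓝 0) {g : E → E}
    {T : E → E →L[ℝ] E} (hgc : ContinuousOn g V)
    (hgd : ∀ x ∈ V, ∀ y, HasLineDerivAt ℝ g (T x y) x y) (hg0 : g 0 = 0)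
    (hTsa : ∀ x ∈ V, ∀ y z : E, ⟪T x y, z⟫ = ⟪y, T x z⟫)
    (hTc : ∀ z, Tendsto (fun x => T x z) (𝓝 0) (𝓝 (T 0 z))) {u : ι → E}
    (hu : Tendsto u l (𝓝 0)) {v₀ : E}
    (hweak : ∀ w, Tendsto (fun i => ⟪‖u i‖⁻¹ • u i, w⟫) l (𝓝 ⟪v₀, w⟫)) (h : E) :
    Tendsto (fun i => ‖u i‖⁻¹ * ⟪g (u i), h⟫) l (𝓝 ⟪v₀, T 0 h⟫) := by
  obtain ⟨w, hw, heq⟩ := exists_tendsto_zero_inv_norm_mul_inner_eq hV hgc hgd hg0 hu fun _ => h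
  refine (tendsto_inner_of_weak_of_tendsto hweak (fun i => norm_inv_norm_smul_le_one (u i))
    ((hTc h).comp hw)).congr' ?_
  filter_upwards [heq, hw.eventually hV] with i hi hwi
  rw [hi, hTsa _ hwi]
  rfl

theorem exists_tendsto_zero_inner_apply_eq_smul {V : Set E} (hV : V ∈ 𝓝 0) {f g : E → E}
    {S T : E → E →L[ℝ] E} (hfc : ContinuousOn f V)
    (hfd : ∀ x ∈ V, ∀ y, HasLineDerivAt ℝ f (S x y) x y) (hf0 : f 0 = 0)
    (hgc : ContinuousOn g V) (hgd : ∀ x ∈ V, ∀ y, HasLineDerivAt ℝ g (T x y) x y) (hg0 : g 0 = 0)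
    {u : ι → E} (hu : Tendsto u l (𝓝 0)) {c : ι → ℝ} (hfg : ∀ i, f (u i) = c i • g (u i)) :
    ∃ w w' : ι → E, Tendsto w l (𝓝 0) ∧ Tendsto w' l (𝓝 0) ∧
      ∀ᶠ i in l, ⟪S (w i) (‖u i‖⁻¹ • u i), ‖u i‖⁻¹ • u i⟫ =
        ⟪(c i • T (w' i)) (‖u i‖⁻¹ • u i), ‖u i‖⁻¹ • u i⟫ := by
  obtain ⟨w, hw, hfw⟩ :=
    exists_tendsto_zero_inv_norm_mul_inner_eq hV hfc hfd hf0 hu fun i => ‖u i‖⁻¹ • u i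
  obtain ⟨w', hw', hgw'⟩ :=
    exists_tendsto_zero_inv_norm_mul_inner_eq hV hgc hgd hg0 hu fun i => ‖u i‖⁻¹ • u i
  refine ⟨w, w', hw, hw', ?_⟩
  filter_upwards [hfw, hgw'] with i hfi hgi
  rw [← hfi, hfg, real_inner_smul_left, mul_left_comm, hgi, smul_apply, real_inner_smul_left]

theorem le_inner_sub_of_coercive_add_compact [l.NeBot] [CompleteSpace E] {v : ι → E} {v₀ : E}
    (hv : ∀ w, Tendsto (fun i => ⟪v i, w⟫) l (𝓝 ⟪v₀, w⟫)) (hv1 : ∀ i, ‖v i‖ = 1)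
    {P Q R : ι → E →L[ℝ] E} {Q₀ R₀ : E →L[ℝ] E} (hQ : Tendsto Q l (𝓝 Q₀))
    (hR : Tendsto R l (𝓝 R₀)) (hQ₀ : IsCompactOperator Q₀) (hR₀ : IsCompactOperator R₀) {C : ℝ}
    (hP : ∀ᶠ i in l, C * ‖v i‖ ^ 2 ≤ ⟪P i (v i), v i⟫)
    (hPQR : ∀ᶠ i in l, ⟪(P i + Q i) (v i), v i⟫ = ⟪R i (v i), v i⟫) :
    C ≤ ⟪R₀ v₀ - Q₀ v₀, v₀⟫ := by
  refine ge_of_tendsto ((hR₀.sub hQ₀).tendsto_inner_apply_self (hR.sub hQ) hv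
    fun i => (hv1 i).le) ?_
  filter_upwards [hP, hPQR] with i hPi hi
  rw [hv1, one_pow, mul_one] at hPi
  rw [add_apply, inner_add_left] at hi
  rw [sub_apply, inner_sub_left]
  linarith

end Bifurcation

theorem stmt_13_general {H : Type*} [NormedAddCommGroup H] [InnerProductSpace ℝ H] [CompleteSpace H]
    (V : Set H) (hVopen : IsOpen V) (hV0 : (0 : H) ∈ V)
    (L : H → ℝ) (gL gG : H → H)
    (hLc : ContinuousOn gL V)
    (hGc : ContinuousOn gG V)
    (hL0 : gL 0 = 0) (hG0 : gG 0 = 0)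
    (B P Q : H → H →L[ℝ] H)
    (hBsa : ∀ u ∈ V, ∀ v w : H, ⟪B u v, w⟫ = ⟪v, B u w⟫)
    (hBgat : ∀ u ∈ V, ∀ v : H,
      Tendsto (fun t : ℝ => t⁻¹ • (gL (u + t • v) - gL u)) (𝓝[≠] (0:ℝ)) (𝓝 (B u v)))
    (hBPQ : ∀ u ∈ V, B u = P u + Q u)
    (hQcpt : ∀ u ∈ V, IsCompactOperator (Q u))
    (hD2 : ∀ v : H, Tendsto (fun u => P u v) (𝓝 0) (𝓝 (P 0 v)))
    (hD3 : Tendsto Q (𝓝 0) (𝓝 (Q 0)))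
    (η₀ C₀' : ℝ) (hη₀ : 0 < η₀) (hC₀' : 0 < C₀')
    (hD4 : ∀ u ∈ Metric.ball (0:H) η₀, ∀ v : H, C₀' * ‖v‖ ^ 2 ≤ ⟪P u v, v⟫)
    (G'' : H → H →L[ℝ] H)
    (hG''sa : ∀ u ∈ V, ∀ v w : H, ⟪G'' u v, w⟫ = ⟪v, G'' u w⟫)
    (hG''gat : ∀ u ∈ V, ∀ v : H,
      Tendsto (fun t : ℝ => t⁻¹ • (gG (u + t • v) - gG u)) (𝓝[≠] (0:ℝ)) (𝓝 (G'' u v)))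
    (hG''cpt : ∀ u ∈ V, IsCompactOperator (G'' u))
    (hG''cont : Tendsto G'' (𝓝 0) (𝓝 (G'' 0)))
    (lamstar : ℝ) (lam : ℕ → ℝ) (u : ℕ → H)
    (hlam : Tendsto lam atTop (𝓝 lamstar)) (huto0 : Tendsto u atTop (𝓝 0))
    (hsol : ∀ k, u k ∈ V ∧ u k ≠ 0 ∧ gL (u k) = lam k • gG (u k))
    (vstar : H)
    (hweak : ∀ w : H,
      Tendsto (fun k => ⟪‖u k‖⁻¹ • u k, w⟫) atTop (𝓝 ⟪vstar, w⟫)) :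
    (∀ h : H, Tendsto (fun k => ‖u k‖⁻¹ * ⟪gL (u k), h⟫) atTop (𝓝 ⟪vstar, B 0 h⟫)) ∧
    (∀ h : H, Tendsto (fun k => (lam k / ‖u k‖) * ⟪gG (u k), h⟫) atTop
      (𝓝 (lamstar * ⟪G'' 0 vstar, h⟫))) ∧
    B 0 vstar = lamstar • G'' 0 vstar ∧
    C₀' ≤ ⟪lamstar • G'' 0 vstar - Q 0 vstar, vstar⟫ ∧
    vstar ≠ 0 := by
  have hV : V ∈ 𝓝 0 := hVopen.mem_nhds hV0
  have hLd : ∀ x ∈ V, ∀ y, HasLineDerivAt ℝ gL (B x y) x y := fun x hx y =>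
    hasLineDerivAt_iff_tendsto_slope_zero.2 (hBgat x hx y)
  have hGd : ∀ x ∈ V, ∀ y, HasLineDerivAt ℝ gG (G'' x y) x y := fun x hx y =>
    hasLineDerivAt_iff_tendsto_slope_zero.2 (hG''gat x hx y)
  have hBc := tendsto_apply_nhds_of_eq_add hV hBPQ hD2 hD3
  have hG''c : ∀ z, Tendsto (fun x => G'' x z) (𝓝 0) (𝓝 (G'' 0 z)) := fun z =>
    ((ContinuousLinearMap.apply ℝ H z).continuous.tendsto _).comp hG''cont
  have hLlim :=
    tendsto_inv_norm_mul_inner_of_hasLineDerivAt hV hLc hLd hL0 hBsa hBc huto0 hweak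
  have hGlim :=
    tendsto_inv_norm_mul_inner_of_hasLineDerivAt hV hGc hGd hG0 hG''sa hG''c huto0 hweak
  have hGlim' : ∀ h : H, Tendsto (fun k => (lam k / ‖u k‖) * ⟪gG (u k), h⟫) atTop
      (𝓝 (lamstar * ⟪G'' 0 vstar, h⟫)) := fun h => by
    simpa only [div_eq_mul_inv, mul_assoc, ← hG''sa 0 hV0] using hlam.mul (hGlim h)
  have hEq : B 0 vstar = lamstar • G'' 0 vstar := ext_inner_right ℝ fun h => by
    rw [hBsa 0 hV0, real_inner_smul_left]
    refine tendsto_nhds_unique (hLlim h) ((hGlim' h).congr fun k => ?_)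
    rw [(hsol k).2.2, real_inner_smul_left]
    ring
  have hCoer : C₀' ≤ ⟪lamstar • G'' 0 vstar - Q 0 vstar, vstar⟫ := by
    obtain ⟨wL, wG, hwL, hwG, hLG⟩ := exists_tendsto_zero_inner_apply_eq_smul hV hLc hLd hL0
      hGc hGd hG0 huto0 fun k => (hsol k).2.2
    refine le_inner_sub_of_coercive_add_compact hweak (fun k => norm_smul_inv_norm (hsol k).2.1)
      (P := fun k => P (wL k)) (hD3.comp hwL) (hlam.smul (hG''cont.comp hwG)) (hQcpt 0 hV0)
      ((hG''cpt 0 hV0).smul lamstar) ?_ ?_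
    · filter_upwards [hwL.eventually (Metric.ball_mem_nhds 0 hη₀)] with k hk using hD4 _ hk _
    · filter_upwards [hLG, hwL.eventually hV] with k hk hwk
      rwa [Function.comp_apply, ← hBPQ _ hwk]
  refine ⟨hLlim, hGlim', hEq, hCoer, fun h0 => ?_⟩
  rw [h0, inner_zero_right] at hCoer
  linarith

/-- (Refinement of the bifurcation-necessity theorem.)  In the setting of the bifurcation
necessity theorem, let `(u_k)` be nonzero solutions of `L'(u_k) = λ_k G'(u_k)` with
`u_k → θ`, `λ_k → λ*`, and `v_k = u_k/‖u_k‖ ⇀ v*` weakly.  Then for any `h ∈ H`,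
`(1/‖u_k‖)(∇L(u_k), h) → (v*, B(θ)h)` and `(λ_k/‖u_k‖)(∇G(u_k), h) → λ*(G''(θ)v*, h)`,
so that `B(θ)v* = λ* G''(θ)v*`; moreover `C₀' ≤ ((λ* G''(θ) - Q(θ))v*, v*)`, hence
`v* ≠ θ`. -/
theorem stmt_13 {H : Type*} [NormedAddCommGroup H] [InnerProductSpace ℝ H] [CompleteSpace H]
    (V : Set H) (hVopen : IsOpen V) (hV0 : (0 : H) ∈ V)
    (L G : H → ℝ) (gL gG : H → H)
    (hLd : ∀ u ∈ V, HasGradientAt L (gL u) u) (hLc : ContinuousOn gL V)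
    (hGd : ∀ u ∈ V, HasGradientAt G (gG u) u) (hGc : ContinuousOn gG V)
    (hL0 : gL 0 = 0) (hG0 : gG 0 = 0)
    (B P Q : H → H →L[ℝ] H)
    (hBsa : ∀ u ∈ V, ∀ v w : H, ⟪B u v, w⟫ = ⟪v, B u w⟫)
    (hBgat : ∀ u ∈ V, ∀ v : H,
      Tendsto (fun t : ℝ => t⁻¹ • (gL (u + t • v) - gL u)) (𝓝[≠] (0:ℝ)) (𝓝 (B u v)))
    (hBPQ : ∀ u ∈ V, B u = P u + Q u)
    (hPpos : ∀ u ∈ V, ∀ v : H, v ≠ 0 → 0 < ⟪P u v, v⟫)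
    (hQcpt : ∀ u ∈ V, IsCompactOperator (Q u))
    (hD2 : ∀ v : H, Tendsto (fun u => P u v) (𝓝 0) (𝓝 (P 0 v)))
    (hD3 : Tendsto Q (𝓝 0) (𝓝 (Q 0)))
    (η₀ C₀' : ℝ) (hη₀ : 0 < η₀) (hC₀' : 0 < C₀') (hball : Metric.ball (0:H) η₀ ⊆ V)
    (hD4 : ∀ u ∈ Metric.ball (0:H) η₀, ∀ v : H, C₀' * ‖v‖ ^ 2 ≤ ⟪P u v, v⟫)
    (G'' : H → H →L[ℝ] H)
    (hG''sa : ∀ u ∈ V, ∀ v w : H, ⟪G'' u v, w⟫ = ⟪v, G'' u w⟫)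
    (hG''gat : ∀ u ∈ V, ∀ v : H,
      Tendsto (fun t : ℝ => t⁻¹ • (gG (u + t • v) - gG u)) (𝓝[≠] (0:ℝ)) (𝓝 (G'' u v)))
    (hG''cpt : ∀ u ∈ V, IsCompactOperator (G'' u))
    (hG''cont : Tendsto G'' (𝓝 0) (𝓝 (G'' 0)))
    (lamstar : ℝ) (lam : ℕ → ℝ) (u : ℕ → H)
    (hlam : Tendsto lam atTop (𝓝 lamstar)) (huto0 : Tendsto u atTop (𝓝 0))
    (hsol : ∀ k, u k ∈ V ∧ u k ≠ 0 ∧ gL (u k) = lam k • gG (u k))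
    (vstar : H)
    (hweak : ∀ w : H,
      Tendsto (fun k => ⟪‖u k‖⁻¹ • u k, w⟫) atTop (𝓝 ⟪vstar, w⟫)) :
    (∀ h : H, Tendsto (fun k => ‖u k‖⁻¹ * ⟪gL (u k), h⟫) atTop (𝓝 ⟪vstar, B 0 h⟫)) ∧
    (∀ h : H, Tendsto (fun k => (lam k / ‖u k‖) * ⟪gG (u k), h⟫) atTop
      (𝓝 (lamstar * ⟪G'' 0 vstar, h⟫))) ∧
    B 0 vstar = lamstar • G'' 0 vstar ∧
    C₀' ≤ ⟪lamstar • G'' 0 vstar - Q 0 vstar, vstar⟫ ∧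
    vstar ≠ 0 :=
  stmt_13_general V hVopen hV0 L gL gG hLc hGc hL0 hG0 B P Q hBsa hBgat hBPQ hQcpt hD2 hD3 η₀ C₀'
    hη₀ hC₀' hD4 G'' hG''sa hG''gat hG''cpt hG''cont lamstar lam u hlam huto0 hsol vstar hweak
end

section
/- Under Hypothesis f_p (conditions (i)-(ii)) with Ω ⊂ ℝⁿ a bounded Sobolev domain and p ∈ [2,∞), there are continuous positive nondecreasing functions g_4, g_5 : [0,∞) → ℝ such that for all (x, ξ): if |α| < m - n/p then |f_α(x,ξ)| ≤ |f_α(x,0)| + g_5(|ξ_∘|)(1 + Σ_{m-n/p ≤ |γ| ≤ m} |ξ_γ|^{p_γ}), and if m - n/p ≤ |α| ≤ m then |f_α(x,ξ)| ≤ |f_α(x,0)| + g_5(|ξ_∘|) + g_5(|ξ_∘|)(Σ_{m-n/p ≤ |γ| ≤ m} |ξ_γ|^{p_γ})^{1/q_α}. -/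
open Filter Topology MeasureTheory

/-- The Euclidean norm `|ξ_∘|` of the low-order part of a jet variable `ξ`. -/
noncomputable def lowNorm {ι : Type} [Fintype ι] (deg : ι → ℕ) (m n : ℕ) (p : ℝ)
    (ξ : ι → ℝ) : ℝ :=
  Real.sqrt (∑ a ∈ Finset.univ.filter (fun a : ι => (deg a : ℝ) < (m : ℝ) - n / p),
    (ξ a) ^ 2)

/-- The quantity `Σ_{m-n/p ≤ |γ| ≤ m} |ξ_γ|^{p_γ}`. -/
noncomputable def highSum {ι : Type} [Fintype ι] (deg : ι → ℕ) (m n : ℕ) (p : ℝ)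
    (pe : ι → ℝ) (ξ : ι → ℝ) : ℝ :=
  ∑ γ ∈ Finset.univ.filter (fun γ : ι => (m : ℝ) - n / p ≤ (deg γ : ℝ)), |ξ γ| ^ pe γ

/-!
Write `ξ = (ξ_∘, ξ_high)`, `L = |ξ_∘|` and `H = Σ |ξ_γ|^{p_γ}`. By the fundamental theorem of
calculus along the segment `t ↦ tξ`,
`f_α(x,ξ) - f_α(x,0) = Σ_β ∫₀¹ f_{αβ}(x,tξ) ξ_β dt`, and each term is bounded by
`t^{e_{αβ}} g₁(L) (1 + L) (1 + H)^{1/q_α}` with `e_{αβ} > -1`: a low-order `ξ_β` is at most `L`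
and then `p_{αβ} ≤ 1/q_α`, a high-order one is at most `(1 + H)^{1/p_β}` and then
`p_{αβ} + 1/p_β ≤ 1/q_α`. A negative `p_{αβ}` is possible only for `|α| = |β| = m`; there
`1 + H(tξ) ≥ t^{p_β} (1 + |ξ_β|^{p_β})` produces the integrable singularity `t^{p_β p_{αβ}}`.
Integrating gives `g₅(t) = C g₁(t)(1 + t)`, and for `|α| ≥ m - n/p` the subadditivity of
`s ↦ s^{1/q_α}` splits `(1 + H)^{1/q_α}`.
-/

open Set

lemma abs_intervalIntegral_le_of_abs_le_mul_rpow {h : ℝ → ℝ} {B e : ℝ} (he : -1 < e)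
    (hh : ∀ t ∈ Ioc (0 : ℝ) 1, |h t| ≤ B * t ^ e) :
    |∫ t in (0 : ℝ)..1, h t| ≤ B / (e + 1) := by
  have hint : ∫ t in (0 : ℝ)..1, B * t ^ e = B / (e + 1) := by
    rw [intervalIntegral.integral_const_mul, integral_rpow (Or.inl he), Real.one_rpow,
      Real.zero_rpow (by linarith), sub_zero, mul_one_div]
  rw [← hint]
  exact intervalIntegral.norm_integral_le_of_norm_le zero_le_one
    (Filter.Eventually.of_forall fun t ht => (Real.norm_eq_abs _).trans_le (hh t ht))
    ((intervalIntegral.intervalIntegrable_rpow' he).const_mul B)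

section Segment

variable {ι : Type*} [Fintype ι] {F : (ι → ℝ) → ℝ} {G : (ι → ℝ) → ι → ℝ}

theorem sub_eq_sum_integral_of_hasFDerivAt
    (hF : ∀ ζ, HasFDerivAt F (∑ β, G ζ β • (ContinuousLinearMap.proj β : (ι → ℝ) →L[ℝ] ℝ)) ζ)
    (hG : ∀ β, Continuous fun ζ => G ζ β) (ξ : ι → ℝ) :
    F ξ - F 0 = ∑ β, ∫ t in (0 : ℝ)..1, G (t • ξ) β * ξ β := by
  have hcont : ∀ β, Continuous fun t : ℝ => G (t • ξ) β * ξ β := fun β =>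
    ((hG β).comp (continuous_id.smul continuous_const)).mul continuous_const
  have hderiv : ∀ t ∈ uIcc (0 : ℝ) 1,
      HasDerivAt (fun t : ℝ => F (t • ξ)) (∑ β, G (t • ξ) β * ξ β) t := fun t _ =>
    ((hF (t • ξ)).comp_hasDerivAt t ((hasDerivAt_id t).smul_const ξ)).congr_deriv (by simp)
  rw [← intervalIntegral.integral_finsetSum fun β _ => (hcont β).intervalIntegrable 0 1,
    intervalIntegral.integral_eq_sub_of_hasDerivAt hderiv
      ((continuous_finsetSum _ fun β _ => hcont β).intervalIntegrable 0 1)]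
  simp

theorem abs_le_abs_add_of_hasFDerivAt
    (hF : ∀ ζ, HasFDerivAt F (∑ β, G ζ β • (ContinuousLinearMap.proj β : (ι → ℝ) →L[ℝ] ℝ)) ζ)
    (hG : ∀ β, Continuous fun ζ => G ζ β) (ξ : ι → ℝ) {e : ι → ℝ} (he : ∀ β, -1 < e β)
    {B : ℝ} (hB : ∀ β, ∀ t ∈ Ioc (0 : ℝ) 1, |G (t • ξ) β * ξ β| ≤ B * t ^ e β) :
    |F ξ| ≤ |F 0| + (∑ β, 1 / (e β + 1)) * B := by
  have hdiff : |F ξ - F 0| ≤ (∑ β, 1 / (e β + 1)) * B := by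
    rw [sub_eq_sum_integral_of_hasFDerivAt hF hG, Finset.sum_mul]
    refine (Finset.abs_sum_le_sum_abs _ _).trans (Finset.sum_le_sum fun β _ => ?_)
    rw [one_div_mul_eq_div]
    exact abs_intervalIntegral_le_of_abs_le_mul_rpow (he β) (hB β)
  linarith [abs_sub_abs_le_abs_sub (F ξ) (F 0)]

end Segment

lemma le_one_add_rpow_one_div {K X P : ℝ} (hK : 0 ≤ K) (hP : 0 < P) (hKX : K ^ P ≤ X) :
    K ≤ (1 + X) ^ (1 / P) := by
  have hX : 0 ≤ X := (Real.rpow_nonneg hK P).trans hKX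
  rw [one_div, Real.le_rpow_inv_iff_of_pos hK (by linarith) hP]
  linarith

/-- `S` plays `H(tξ)` and `K` plays `|ξ_β|`: for `r < 0` the lower bound `t^P K^P ≤ S` is what
keeps `(1 + S)^r` under control as `t → 0`. -/
lemma one_add_rpow_mul_le {P K S H r t : ℝ} (hP : 0 < P) (hK : 0 ≤ K) (ht : t ∈ Ioc (0 : ℝ) 1)
    (hS : 0 ≤ S) (hSH : S ≤ H) (hKH : K ^ P ≤ H) (htKS : t ^ P * K ^ P ≤ S)
    (hr : 0 ≤ r + 1 / P) :
    (1 + S) ^ r * K ≤ t ^ (P * min r 0) * (1 + H) ^ (r + 1 / P) := by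
  rcases le_or_gt 0 r with hr0 | hr0
  · rw [min_eq_right hr0, mul_zero, Real.rpow_zero, one_mul, Real.rpow_add (by linarith)]
    exact mul_le_mul (Real.rpow_le_rpow (by linarith) (by linarith) hr0)
      (le_one_add_rpow_one_div hK hP hKH) hK (Real.rpow_nonneg (by linarith) _)
  · rw [min_eq_left hr0.le]
    have htP : 0 < t ^ P := Real.rpow_pos_of_pos ht.1 P
    have htP1 : t ^ P ≤ 1 := Real.rpow_le_one ht.1.le ht.2 hP.le
    have hKP : 0 ≤ K ^ P := Real.rpow_nonneg hK P
    calc (1 + S) ^ r * K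
        ≤ (t ^ P * (1 + K ^ P)) ^ r * (1 + K ^ P) ^ (1 / P) :=
          mul_le_mul (Real.rpow_le_rpow_of_nonpos (by positivity) (by nlinarith) hr0.le)
            (le_one_add_rpow_one_div hK hP le_rfl) hK (by positivity)
      _ = t ^ (P * r) * (1 + K ^ P) ^ (r + 1 / P) := by
          rw [Real.mul_rpow htP.le (by positivity), ← Real.rpow_mul ht.1.le,
            Real.rpow_add (by positivity)]
          ring
      _ ≤ t ^ (P * r) * (1 + H) ^ (r + 1 / P) :=
          mul_le_mul_of_nonneg_left (Real.rpow_le_rpow (by positivity) (by linarith) hr)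
            (Real.rpow_nonneg ht.1.le _)

section Jet

variable {ι : Type} [Fintype ι] {deg : ι → ℕ} {m n : ℕ} {p : ℝ} {pe : ι → ℝ}

lemma lowNorm_nonneg (ξ : ι → ℝ) : 0 ≤ lowNorm deg m n p ξ :=
  Real.sqrt_nonneg _

lemma abs_le_lowNorm {β : ι} (hβ : (deg β : ℝ) < m - n / p) (ξ : ι → ℝ) :
    |ξ β| ≤ lowNorm deg m n p ξ := by
  rw [← Real.sqrt_sq_eq_abs]
  exact Real.sqrt_le_sqrt <| Finset.single_le_sum (f := fun a => ξ a ^ 2)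
    (fun a _ => sq_nonneg _) (Finset.mem_filter.2 ⟨Finset.mem_univ _, hβ⟩)

lemma lowNorm_smul_le {t : ℝ} (ht : |t| ≤ 1) (ξ : ι → ℝ) :
    lowNorm deg m n p (t • ξ) ≤ lowNorm deg m n p ξ := by
  refine Real.sqrt_le_sqrt (Finset.sum_le_sum fun a _ => ?_)
  rw [Pi.smul_apply, smul_eq_mul, mul_pow]
  exact mul_le_of_le_one_left (sq_nonneg _) ((sq_le_one_iff_abs_le_one t).2 ht)

lemma highSum_nonneg (ξ : ι → ℝ) : 0 ≤ highSum deg m n p pe ξ :=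
  Finset.sum_nonneg fun _ _ => by positivity

lemma abs_rpow_le_highSum {β : ι} (hβ : (m : ℝ) - n / p ≤ deg β) (ξ : ι → ℝ) :
    |ξ β| ^ pe β ≤ highSum deg m n p pe ξ :=
  Finset.single_le_sum (f := fun γ => |ξ γ| ^ pe γ) (fun _ _ => by positivity)
    (Finset.mem_filter.2 ⟨Finset.mem_univ _, hβ⟩)

lemma highSum_smul_le (hpe : ∀ γ, (m : ℝ) - n / p ≤ deg γ → 0 ≤ pe γ) {t : ℝ} (ht : |t| ≤ 1)
    (ξ : ι → ℝ) : highSum deg m n p pe (t • ξ) ≤ highSum deg m n p pe ξ := by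
  refine Finset.sum_le_sum fun γ hγ => Real.rpow_le_rpow (abs_nonneg _) ?_
    (hpe γ (Finset.mem_filter.1 hγ).2)
  rw [Pi.smul_apply, smul_eq_mul, abs_mul]
  exact mul_le_of_le_one_left (abs_nonneg _) ht

lemma abs_mul_le_of_growth {F : (ι → ℝ) → ℝ} {g : ℝ → ℝ} {r a : ℝ} {β : ι}
    (hg : Monotone g) (hg0 : ∀ s, 0 ≤ g s) (hpe : ∀ γ, (m : ℝ) - n / p ≤ deg γ → 1 < pe γ)
    (hF : ∀ ζ, |F ζ| ≤ g (lowNorm deg m n p ζ) * (1 + highSum deg m n p pe ζ) ^ r)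
    (hlow : (deg β : ℝ) < m - n / p → 0 ≤ r ∧ r ≤ a)
    (hhigh : (m : ℝ) - n / p ≤ deg β → 0 ≤ r + 1 / pe β ∧ r + 1 / pe β ≤ a)
    (ξ : ι → ℝ) {t : ℝ} (ht : t ∈ Ioc (0 : ℝ) 1) :
    |F (t • ξ) * ξ β| ≤ g (lowNorm deg m n p ξ) * (1 + lowNorm deg m n p ξ) *
      (1 + highSum deg m n p pe ξ) ^ a * t ^ (pe β * min r 0) := by
  set L := lowNorm deg m n p ξ
  set H := highSum deg m n p pe ξ
  set S := highSum deg m n p pe (t • ξ)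
  have ht1 : |t| ≤ 1 := by rw [abs_of_pos ht.1]; exact ht.2
  have hL : 0 ≤ L := lowNorm_nonneg ξ
  have hH : 0 ≤ H := highSum_nonneg ξ
  have hS : 0 ≤ S := highSum_nonneg _
  have hSH : S ≤ H := highSum_smul_le (fun γ hγ => (one_pos.trans (hpe γ hγ)).le) ht1 ξ
  have hFt : |F (t • ξ)| ≤ g L * (1 + S) ^ r :=
    (hF _).trans (mul_le_mul_of_nonneg_right (hg (lowNorm_smul_le ht1 ξ)) (by positivity))
  rw [abs_mul]
  rcases lt_or_ge (deg β : ℝ) (m - n / p) with hβ | hβ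
  · obtain ⟨hr0, hra⟩ := hlow hβ
    rw [min_eq_right hr0, mul_zero, Real.rpow_zero, mul_one]
    have hSa : (1 + S) ^ r ≤ (1 + H) ^ a :=
      (Real.rpow_le_rpow (by linarith) (by linarith) hr0).trans
        (Real.rpow_le_rpow_of_exponent_le (by linarith) hra)
    calc |F (t • ξ)| * |ξ β| ≤ g L * (1 + S) ^ r * (1 + L) :=
          mul_le_mul hFt ((abs_le_lowNorm hβ ξ).trans (by linarith)) (abs_nonneg _)
            (mul_nonneg (hg0 L) (by positivity))
      _ ≤ g L * (1 + H) ^ a * (1 + L) := by gcongr; exact hg0 L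
      _ = g L * (1 + L) * (1 + H) ^ a := by ring
  · obtain ⟨hr, hra⟩ := hhigh hβ
    have hP : 0 < pe β := one_pos.trans (hpe β hβ)
    have htKS : t ^ pe β * |ξ β| ^ pe β ≤ S := by
      rw [← abs_of_pos ht.1, ← Real.mul_rpow (abs_nonneg _) (abs_nonneg _), ← abs_mul]
      exact abs_rpow_le_highSum hβ (t • ξ)
    have hkey := one_add_rpow_mul_le hP (abs_nonneg _) ht hS hSH (abs_rpow_le_highSum hβ ξ)
      htKS hr
    have hte : 0 ≤ t ^ (pe β * min r 0) := Real.rpow_nonneg ht.1.le _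
    calc |F (t • ξ)| * |ξ β| ≤ g L * ((1 + S) ^ r * |ξ β|) := by
          rw [← mul_assoc]; exact mul_le_mul_of_nonneg_right hFt (abs_nonneg _)
      _ ≤ g L * (t ^ (pe β * min r 0) * (1 + H) ^ a) := by
          refine mul_le_mul_of_nonneg_left (hkey.trans ?_) (hg0 L)
          gcongr
          linarith
      _ ≤ g L * (1 + L) * (1 + H) ^ a * t ^ (pe β * min r 0) := by
          have h1L : 1 ≤ 1 + L := by linarith
          have : 0 ≤ g L * (t ^ (pe β * min r 0) * (1 + H) ^ a) :=
            mul_nonneg (hg0 L) (mul_nonneg hte (by positivity))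
          nlinarith

end Jet

lemma one_lt_div_sub_mul {n k p : ℝ} (hk : 0 ≤ k) (hp : 1 < p) (hkp : k * p < n) :
    1 < n * p / (n - k * p) := by
  have hn : 0 < n := by nlinarith
  rw [one_lt_div (by linarith)]
  nlinarith [mul_pos hn (sub_pos.2 hp)]

lemma one_lt_pe_of_le {ι : Type} {deg : ι → ℕ} {m n : ℕ} {p : ℝ} {pe : ι → ℝ} (hp : 1 < p)
    (hdeg : ∀ a, deg a ≤ m) (hpe1 : ∀ γ, ((deg γ : ℝ) = (m : ℝ) - n / p) → 1 < pe γ)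
    (hpe2 : ∀ γ, ((m : ℝ) - n / p < (deg γ : ℝ)) →
      pe γ = n * p / (n - ((m : ℝ) - deg γ) * p))
    (γ : ι) (hγ : (m : ℝ) - n / p ≤ deg γ) : 1 < pe γ := by
  rcases hγ.eq_or_lt with h | h
  · exact hpe1 γ h.symm
  · rw [hpe2 γ h]
    refine one_lt_div_sub_mul (sub_nonneg.2 (Nat.cast_le.2 (hdeg γ))) hp ?_
    rw [← lt_div_iff₀ (by linarith)]
    linarith

/-- The exponent conditions of Hypothesis `f_p`, with the threshold `m - n/p` written `s`. -/
structure GrowthExponents {ι : Type} (deg : ι → ℕ) (m : ℕ) (s : ℝ) (pe qe : ι → ℝ)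
    (pab : ι → ι → ℝ) : Prop where
  deg_le : ∀ a, deg a ≤ m
  one_lt_pe : ∀ γ, s ≤ deg γ → 1 < pe γ
  qe_of_lt : ∀ γ, (deg γ : ℝ) < s → qe γ = 1
  qe_of_le : ∀ γ, s ≤ deg γ → qe γ = pe γ / (pe γ - 1)
  pab_comm : ∀ α β, pab α β = pab β α
  pab_top : ∀ α β, deg α = m → deg β = m → pab α β = 1 - 1 / pe α - 1 / pe β
  pab_le_lt : ∀ α β, s ≤ deg α → (deg β : ℝ) < s → pab α β = 1 - 1 / pe α
  pab_lt_lt : ∀ α β, (deg α : ℝ) < s → (deg β : ℝ) < s → pab α β = 1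
  pab_le_le : ∀ α β, s ≤ deg α → s ≤ deg β → deg α + deg β < 2 * m →
    0 < pab α β ∧ pab α β < 1 - 1 / pe α - 1 / pe β

namespace GrowthExponents

variable {ι : Type} {deg : ι → ℕ} {m : ℕ} {s : ℝ} {pe qe : ι → ℝ} {pab : ι → ι → ℝ}

lemma one_div_pe_mem (h : GrowthExponents deg m s pe qe pab) {γ : ι} (hγ : s ≤ deg γ) :
    0 < 1 / pe γ ∧ 1 / pe γ < 1 := by
  have hγ1 := h.one_lt_pe γ hγ
  exact ⟨by positivity, (div_lt_one (by linarith)).2 hγ1⟩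

lemma one_div_qe_of_le (h : GrowthExponents deg m s pe qe pab) {α : ι} (hα : s ≤ deg α) :
    1 / qe α = 1 - 1 / pe α := by
  have hα1 := h.one_lt_pe α hα
  rw [h.qe_of_le α hα, one_div_div]
  field_simp

lemma pab_mem_of_lt (h : GrowthExponents deg m s pe qe pab) (α : ι) {β : ι}
    (hβ : (deg β : ℝ) < s) : 0 ≤ pab α β ∧ pab α β ≤ 1 / qe α := by
  rcases lt_or_ge (deg α : ℝ) s with hα | hα
  · rw [h.pab_lt_lt α β hα hβ, h.qe_of_lt α hα]
    norm_num
  · rw [h.pab_le_lt α β hα hβ, h.one_div_qe_of_le hα]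
    exact ⟨by linarith [h.one_div_pe_mem hα], le_rfl⟩

lemma pab_add_mem_of_le (h : GrowthExponents deg m s pe qe pab) (α : ι) {β : ι}
    (hβ : s ≤ deg β) : 0 < pab α β + 1 / pe β ∧ pab α β + 1 / pe β ≤ 1 / qe α := by
  rcases lt_or_ge (deg α : ℝ) s with hα | hα
  · rw [h.pab_comm, h.pab_le_lt β α hβ hα, h.qe_of_lt α hα]
    norm_num
  · rw [h.one_div_qe_of_le hα]
    have hαp := h.one_div_pe_mem hα
    by_cases hm : deg α = m ∧ deg β = m
    · rw [h.pab_top α β hm.1 hm.2]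
      constructor <;> linarith
    · have := h.deg_le α
      have := h.deg_le β
      obtain ⟨h0, h1⟩ := h.pab_le_le α β hα hβ (by omega)
      constructor <;> linarith [h.one_div_pe_mem hβ]

lemma neg_one_lt_mul_min_pab (h : GrowthExponents deg m s pe qe pab) (α β : ι) :
    -1 < pe β * min (pab α β) 0 := by
  rcases lt_or_ge (deg β : ℝ) s with hβ | hβ
  · rw [min_eq_right (h.pab_mem_of_lt α hβ).1]
    norm_num
  rcases le_or_gt 0 (pab α β) with h0 | h0
  · rw [min_eq_right h0]
    norm_num
  have hP : 0 < pe β := one_pos.trans (h.one_lt_pe β hβ)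
  rw [min_eq_left h0.le]
  calc -1 = pe β * -(1 / pe β) := by field_simp
    _ < pe β * pab α β := by
        gcongr
        linarith [(h.pab_add_mem_of_le α hβ).1]

end GrowthExponents

section Estimate

variable {ι : Type} [Fintype ι] {deg : ι → ℕ} {m n : ℕ} {p : ℝ} {pe qe : ι → ℝ}
  {pab : ι → ι → ℝ} {F : (ι → ℝ) → ℝ} {G : (ι → ℝ) → ι → ℝ} {g : ℝ → ℝ}

theorem abs_le_abs_add_of_growth (h : GrowthExponents deg m ((m : ℝ) - n / p) pe qe pab)
    (hg : Monotone g) (hg0 : ∀ s, 0 ≤ g s) (α : ι)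
    (hF : ∀ ζ, HasFDerivAt F (∑ β, G ζ β • (ContinuousLinearMap.proj β : (ι → ℝ) →L[ℝ] ℝ)) ζ)
    (hG : ∀ β, Continuous fun ζ => G ζ β)
    (hgrowth : ∀ ζ β,
      |G ζ β| ≤ g (lowNorm deg m n p ζ) * (1 + highSum deg m n p pe ζ) ^ pab α β)
    (ξ : ι → ℝ) :
    |F ξ| ≤ |F 0| + (∑ β, 1 / (pe β * min (pab α β) 0 + 1)) *
      (g (lowNorm deg m n p ξ) * (1 + lowNorm deg m n p ξ) *
        (1 + highSum deg m n p pe ξ) ^ (1 / qe α)) :=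
  abs_le_abs_add_of_hasFDerivAt hF hG ξ (h.neg_one_lt_mul_min_pab α) fun β _ ht =>
    abs_mul_le_of_growth hg hg0 h.one_lt_pe (hgrowth · β) (h.pab_mem_of_lt α)
      (fun hβ => (h.pab_add_mem_of_le α hβ).imp_left le_of_lt) ξ ht

end Estimate

noncomputable def growthMajorant (C : ℝ) (g : ℝ → ℝ) (t : ℝ) : ℝ := C * g t * (1 + max t 0)

lemma growthMajorant_spec {C : ℝ} {g : ℝ → ℝ} (hC : 0 < C) (hgc : Continuous g)
    (hg0 : ∀ t, 0 < g t) (hg : Monotone g) :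
    Continuous (growthMajorant C g) ∧ (∀ t, 0 < growthMajorant C g t) ∧
      Monotone (growthMajorant C g) := by
  refine ⟨by unfold growthMajorant; fun_prop, fun t => ?_, fun s t hst => ?_⟩
  · have := hg0 t
    unfold growthMajorant
    positivity
  · have := hg0 t
    exact mul_le_mul (mul_le_mul_of_nonneg_left (hg hst) hC.le) (by gcongr) (by positivity)
      (by positivity)

theorem stmt_16_general
    (n m : ℕ) (p : ℝ) (hp : 2 ≤ p)
    (Ω : Set (EuclideanSpace ℝ (Fin n)))
    (ι : Type) [Fintype ι]
    (deg : ι → ℕ) (hdeg : ∀ a, deg a ≤ m)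
    (pe qe : ι → ℝ)
    (hpe1 : ∀ γ, ((deg γ : ℝ) = (m : ℝ) - n / p) → 1 < pe γ)
    (hpe2 : ∀ γ, ((m : ℝ) - n / p < (deg γ : ℝ)) →
      pe γ = n * p / (n - ((m : ℝ) - deg γ) * p))
    (hqe1 : ∀ γ, ((deg γ : ℝ) < (m : ℝ) - n / p) → qe γ = 1)
    (hqe2 : ∀ γ, ((m : ℝ) - n / p ≤ (deg γ : ℝ)) → qe γ = pe γ / (pe γ - 1))
    (pab : ι → ι → ℝ) (hpabsymm : ∀ α β, pab α β = pab β α)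
    (hpab1 : ∀ α β, deg α = m → deg β = m → pab α β = 1 - 1 / pe α - 1 / pe β)
    (hpab2 : ∀ α β, ((m : ℝ) - n / p ≤ (deg α : ℝ)) → ((deg β : ℝ) < (m : ℝ) - n / p) →
      pab α β = 1 - 1 / pe α)
    (hpab3 : ∀ α β, ((deg α : ℝ) < (m : ℝ) - n / p) → ((deg β : ℝ) < (m : ℝ) - n / p) →
      pab α β = 1)
    (hpab4 : ∀ α β, ((m : ℝ) - n / p ≤ (deg α : ℝ)) → ((m : ℝ) - n / p ≤ (deg β : ℝ)) →
      deg α + deg β < 2 * m → 0 < pab α β ∧ pab α β < 1 - 1 / pe α - 1 / pe β)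
    (fα : EuclideanSpace ℝ (Fin n) → (ι → ℝ) → ι → ℝ)
    (fαβ : EuclideanSpace ℝ (Fin n) → (ι → ℝ) → ι → ι → ℝ)
    -- (i): `f(x,·)` is twice continuously differentiable with partials `fα`, `fαβ`,
    -- and the integrability conditions at `ξ = 0`
    (hf1 : ∀ x ∈ closure Ω, ∀ ξ : ι → ℝ, ∀ α : ι,
      HasFDerivAt (fun ζ => fα x ζ α)
        (∑ β : ι, fαβ x ξ α β • (ContinuousLinearMap.proj β : (ι → ℝ) →L[ℝ] ℝ)) ξ)
    (hf2 : ∀ x ∈ closure Ω, ∀ α β : ι, Continuous fun ξ : ι → ℝ => fαβ x ξ α β)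
    -- (ii): the growth condition (1.5) on the second partial derivatives
    (g₁ : ℝ → ℝ) (hg₁c : Continuous g₁) (hg₁pos : ∀ t, 0 < g₁ t) (hg₁mono : Monotone g₁)
    (hgrowth : ∀ x ∈ closure Ω, ∀ ξ : ι → ℝ, ∀ α β : ι,
      |fαβ x ξ α β| ≤ g₁ (lowNorm deg m n p ξ) * (1 + highSum deg m n p pe ξ) ^ pab α β) :
    ∃ g₄ g₅ : ℝ → ℝ,
      (Continuous g₄ ∧ (∀ t, 0 < g₄ t) ∧ Monotone g₄) ∧
      (Continuous g₅ ∧ (∀ t, 0 < g₅ t) ∧ Monotone g₅) ∧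
      ∀ x ∈ closure Ω, ∀ ξ : ι → ℝ, ∀ α : ι,
        (((deg α : ℝ) < (m : ℝ) - n / p) →
          |fα x ξ α| ≤ |fα x 0 α| +
            g₅ (lowNorm deg m n p ξ) * (1 + highSum deg m n p pe ξ)) ∧
        (((m : ℝ) - n / p ≤ (deg α : ℝ)) →
          |fα x ξ α| ≤ |fα x 0 α| + g₅ (lowNorm deg m n p ξ) +
            g₅ (lowNorm deg m n p ξ) * (highSum deg m n p pe ξ) ^ (1 / qe α)) := by
  have hexp : GrowthExponents deg m ((m : ℝ) - n / p) pe qe pab :=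
    ⟨hdeg, one_lt_pe_of_le (by linarith) hdeg hpe1 hpe2, hqe1, hqe2, hpabsymm, hpab1, hpab2,
      hpab3, hpab4⟩
  obtain ⟨M, hM⟩ := Finite.exists_le fun α => ∑ β, 1 / (pe β * min (pab α β) 0 + 1)
  set C : ℝ := max M 1
  have hg₅ := growthMajorant_spec (lt_max_of_lt_right one_pos : 0 < C) hg₁c hg₁pos hg₁mono
  refine ⟨fun _ => 1, growthMajorant C g₁, ⟨continuous_const, fun _ => one_pos, monotone_const⟩,
    hg₅, fun x hx ξ α => ?_⟩
  have hbound := abs_le_abs_add_of_growth hexp hg₁mono (fun t => (hg₁pos t).le) α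
    (hf1 x hx · α) (hf2 x hx α) (fun ζ β => hgrowth x hx ζ α β) ξ
  set L := lowNorm deg m n p ξ
  set H := highSum deg m n p pe ξ
  have hL : 0 ≤ L := lowNorm_nonneg ξ
  have hH : 0 ≤ H := highSum_nonneg ξ
  have hmain : |fα x ξ α| ≤ |fα x 0 α| + growthMajorant C g₁ L * (1 + H) ^ (1 / qe α) := by
    refine hbound.trans ?_
    have := hg₁pos L
    rw [growthMajorant, max_eq_left hL, mul_assoc C, mul_assoc C]
    gcongr
    exact (hM α).trans (le_max_left _ _)
  refine ⟨fun hα => by simpa [hexp.qe_of_lt α hα] using hmain, fun hα => ?_⟩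
  have hq := hexp.one_div_qe_of_le hα
  have hpα := hexp.one_div_pe_mem hα
  have hsplit : (1 + H) ^ (1 / qe α) ≤ 1 + H ^ (1 / qe α) := by
    have := Real.rpow_add_le_add_rpow (p := 1 / qe α) zero_le_one hH (by linarith) (by linarith)
    rwa [Real.one_rpow] at this
  calc |fα x ξ α| ≤ |fα x 0 α| + growthMajorant C g₁ L * (1 + H) ^ (1 / qe α) := hmain
    _ ≤ |fα x 0 α| + growthMajorant C g₁ L * (1 + H ^ (1 / qe α)) := by
        gcongr
        exact (hg₅.2.1 L).le
    _ = |fα x 0 α| + growthMajorant C g₁ L + growthMajorant C g₁ L * H ^ (1 / qe α) := by ring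

/-- Under Hypothesis `f_p` (conditions (i)-(ii)), there are continuous positive
nondecreasing functions `g₄, g₅` such that for all `(x, ξ)`:
if `|α| < m - n/p` then
`|f_α(x,ξ)| ≤ |f_α(x,0)| + g₅(|ξ_∘|)(1 + Σ_{m-n/p ≤ |γ| ≤ m}|ξ_γ|^{p_γ})`, and if
`m - n/p ≤ |α| ≤ m` then
`|f_α(x,ξ)| ≤ |f_α(x,0)| + g₅(|ξ_∘|) + g₅(|ξ_∘|)(Σ_{m-n/p ≤ |γ| ≤ m}|ξ_γ|^{p_γ})^{1/q_α}`.
Here multi-indices `α` of length `|α| ≤ m` are modelled by an abstract finite index type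
`ι` with a degree function `deg`. -/
theorem stmt_16
    (n m : ℕ) (p : ℝ) (hp : 2 ≤ p)
    (Ω : Set (EuclideanSpace ℝ (Fin n))) (hΩopen : IsOpen Ω) (hΩbd : Bornology.IsBounded Ω)
    (ι : Type) [Fintype ι] [DecidableEq ι]
    (deg : ι → ℕ) (hdeg : ∀ a, deg a ≤ m)
    (pe qe : ι → ℝ)
    (hpe1 : ∀ γ, ((deg γ : ℝ) = (m : ℝ) - n / p) → 1 < pe γ)
    (hpe2 : ∀ γ, ((m : ℝ) - n / p < (deg γ : ℝ)) →
      pe γ = n * p / (n - ((m : ℝ) - deg γ) * p))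
    (hqe1 : ∀ γ, ((deg γ : ℝ) < (m : ℝ) - n / p) → qe γ = 1)
    (hqe2 : ∀ γ, ((m : ℝ) - n / p ≤ (deg γ : ℝ)) → qe γ = pe γ / (pe γ - 1))
    (pab : ι → ι → ℝ) (hpabsymm : ∀ α β, pab α β = pab β α)
    (hpab1 : ∀ α β, deg α = m → deg β = m → pab α β = 1 - 1 / pe α - 1 / pe β)
    (hpab2 : ∀ α β, ((m : ℝ) - n / p ≤ (deg α : ℝ)) → ((deg β : ℝ) < (m : ℝ) - n / p) →
      pab α β = 1 - 1 / pe α)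
    (hpab3 : ∀ α β, ((deg α : ℝ) < (m : ℝ) - n / p) → ((deg β : ℝ) < (m : ℝ) - n / p) →
      pab α β = 1)
    (hpab4 : ∀ α β, ((m : ℝ) - n / p ≤ (deg α : ℝ)) → ((m : ℝ) - n / p ≤ (deg β : ℝ)) →
      deg α + deg β < 2 * m → 0 < pab α β ∧ pab α β < 1 - 1 / pe α - 1 / pe β)
    (f : EuclideanSpace ℝ (Fin n) → (ι → ℝ) → ℝ)
    (fα : EuclideanSpace ℝ (Fin n) → (ι → ℝ) → ι → ℝ)
    (fαβ : EuclideanSpace ℝ (Fin n) → (ι → ℝ) → ι → ι → ℝ)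
    -- Carathéodory condition: measurability in `x`
    (hmeasf : ∀ ξ, Measurable fun x => f x ξ)
    (hmeasfα : ∀ ξ α, Measurable fun x => fα x ξ α)
    -- (i): `f(x,·)` is twice continuously differentiable with partials `fα`, `fαβ`,
    -- and the integrability conditions at `ξ = 0`
    (hf0 : ∀ x ∈ closure Ω, ∀ ξ : ι → ℝ,
      HasFDerivAt (f x)
        (∑ α : ι, fα x ξ α • (ContinuousLinearMap.proj α : (ι → ℝ) →L[ℝ] ℝ)) ξ)
    (hf1 : ∀ x ∈ closure Ω, ∀ ξ : ι → ℝ, ∀ α : ι,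
      HasFDerivAt (fun ζ => fα x ζ α)
        (∑ β : ι, fαβ x ξ α β • (ContinuousLinearMap.proj β : (ι → ℝ) →L[ℝ] ℝ)) ξ)
    (hf2 : ∀ x ∈ closure Ω, ∀ α β : ι, Continuous fun ξ : ι → ℝ => fαβ x ξ α β)
    (hfL1 : IntegrableOn (fun x => f x 0) Ω)
    (hfαL1 : ∀ α, ((deg α : ℝ) < (m : ℝ) - n / p) → IntegrableOn (fun x => fα x 0 α) Ω)
    (hfαLq : ∀ α, ((m : ℝ) - n / p ≤ (deg α : ℝ)) →
      MemLp (fun x => fα x 0 α) (ENNReal.ofReal (qe α)) (volume.restrict Ω))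
    -- (ii): the growth condition (1.5) on the second partial derivatives
    (g₁ : ℝ → ℝ) (hg₁c : Continuous g₁) (hg₁pos : ∀ t, 0 < g₁ t) (hg₁mono : Monotone g₁)
    (hgrowth : ∀ x ∈ closure Ω, ∀ ξ : ι → ℝ, ∀ α β : ι,
      |fαβ x ξ α β| ≤ g₁ (lowNorm deg m n p ξ) * (1 + highSum deg m n p pe ξ) ^ pab α β) :
    ∃ g₄ g₅ : ℝ → ℝ,
      (Continuous g₄ ∧ (∀ t, 0 < g₄ t) ∧ Monotone g₄) ∧
      (Continuous g₅ ∧ (∀ t, 0 < g₅ t) ∧ Monotone g₅) ∧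
      ∀ x ∈ closure Ω, ∀ ξ : ι → ℝ, ∀ α : ι,
        (((deg α : ℝ) < (m : ℝ) - n / p) →
          |fα x ξ α| ≤ |fα x 0 α| +
            g₅ (lowNorm deg m n p ξ) * (1 + highSum deg m n p pe ξ)) ∧
        (((m : ℝ) - n / p ≤ (deg α : ℝ)) →
          |fα x ξ α| ≤ |fα x 0 α| + g₅ (lowNorm deg m n p ξ) +
            g₅ (lowNorm deg m n p ξ) * (highSum deg m n p pe ξ) ^ (1 / qe α)) :=
  stmt_16_general n m p hp Ω ι deg hdeg pe qe hpe1 hpe2 hqe1 hqe2 pab hpabsymm hpab1 hpab2 hpab3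
    hpab4 fα fαβ hf1 hf2 g₁ hg₁c hg₁pos hg₁mono hgrowth
end
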